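/- arXiv:2302.04268 — 8 statements merged into one kernel-verified Lean document; each statement's English description precedes it below -/
import Mathlib

section
/- Let X be a finite set, 𝒰, 𝒱 ⊆ ℂ^X⊗ℂ^X quantum graphs, H a Hilbert space, and U = (U_{a,x})_{a,x∈X} a bi-unitary with entries in B(H). Then the following are equivalent. (a) For every ξ ∈ 𝒰 and every η ∈ 𝒱^⊥: ∑_{x,y,a,b∈X} conj(ξ_{x,y})·η_{a,b}·U_{a,x}U_{b,y}^* = 0, and for every ξ' ∈ 𝒱 and every η' ∈ 𝒰^⊥: ∑_{x,y,a,b∈X} η'_{x,y}·conj(ξ'_{a,b})·U_{a,x}U_{b,y}^* = 0. (b) For every ξ ∈ 𝒰, the operator U(M_ξ⊗I_H)U^* belongs to span{S⊗R : S ∈ S̃_𝒱, R ∈ B(H)}, and for every ξ' ∈ 𝒱, the operator U^t(M_{ξ'}⊗I_H)(U^t)^* belongs to span{S⊗R : S ∈ S̃_𝒰, R ∈ B(H)}. Here M_ζ := ∑_{x,y∈X} ζ_{x,y}·ε_{y,x} ∈ M_X for ζ ∈ ℂ^X⊗ℂ^X, S̃_𝒲 := {M_ζ : ζ ∈ 𝒲}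 ⊆ M_X, M⊗I_H is the block operator on the direct sum of X copies of H with (x,y) block M_{x,y}·I_H, and S⊗R is the block operator with (x,y) block S_{x,y}·R. -/
/-!
A family `W : ι → M` lies in `V ⊗ M` exactly when `∑ p, η p • W p = 0` for every `η`
annihilated by `V` under the dot product. The `(ξ, η)` orthogonality sum is the adjoint of the
contraction of the block matrix `U (M_ξ ⊗ 1) U^*` against `conj η`, so it vanishes for all
`η ⊥ 𝒱` iff `U (M_ξ ⊗ 1) U^*` lies in `S̃_𝒱 ⊗ B(H)`; the second half is the first one for `Uᵗ`.
-/

open scoped ComplexOrder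
open Matrix

noncomputable section

/-- A quantum graph: a skew and symmetric subspace of `ℂ^X ⊗ ℂ^X`. -/
def IsQuantumGraph {X : Type*} [Fintype X] (U : Submodule ℂ (X × X → ℂ)) : Prop :=
  (∀ ξ ∈ U, ∑ x : X, ξ (x, x) = 0) ∧
  (∀ ξ ∈ U, (fun p : X × X => ξ (p.2, p.1)) ∈ U)

/-- A block operator matrix `U = (U_{a,x})` is a bi-unitary: both `U` and its transpose
`U^t` are unitary. -/
def IsBiunitary {X : Type*} [Fintype X] [DecidableEq X]
    {H : Type*} [NormedAddCommGroup H] [InnerProductSpace ℂ H] [CompleteSpace H]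
    (U : X → X → (H →L[ℂ] H)) : Prop :=
  (∀ x x' : X, ∑ a : X, ContinuousLinearMap.adjoint (U a x) ∘L U a x' =
      if x = x' then (1 : H →L[ℂ] H) else 0) ∧
  (∀ a a' : X, ∑ x : X, U a x ∘L ContinuousLinearMap.adjoint (U a' x) =
      if a = a' then (1 : H →L[ℂ] H) else 0) ∧
  (∀ a a' : X, ∑ x : X, ContinuousLinearMap.adjoint (U x a) ∘L U x a' =
      if a = a' then (1 : H →L[ℂ] H) else 0) ∧
  (∀ x x' : X, ∑ a : X, U x a ∘L ContinuousLinearMap.adjoint (U x' a) =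
      if x = x' then (1 : H →L[ℂ] H) else 0)

theorem mem_span_smul_iff_forall_dotProduct {K ι M : Type*} [Field K] [Fintype ι]
    [AddCommGroup M] [Module K M] (V : Submodule K (ι → K)) (W : ι → M) :
    W ∈ Submodule.span K {w : ι → M | ∃ ζ ∈ V, ∃ R : M, w = fun p => ζ p • R} ↔
      ∀ η : ι → K, (∀ ζ ∈ V, ζ ⬝ᵥ η = 0) → ∑ p, η p • W p = 0 := by
  classical
  constructor
  · intro hW η hη
    induction hW using Submodule.span_induction with
    | mem w hw =>
      obtain ⟨ζ, hζ, R, rfl⟩ := hw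
      have hζη := hη ζ hζ
      simp_rw [smul_smul, ← Finset.sum_smul, mul_comm (η _)]
      rw [← dotProduct, hζη, zero_smul]
    | zero => simp
    | add w w' _ _ hw hw' => simp [smul_add, Finset.sum_add_distrib, hw, hw']
    | smul c w _ hw => simp [smul_comm _ c, ← Finset.smul_sum, hw]
  · intro hW
    obtain ⟨g, hg⟩ := V.subtype.exists_leftInverse_of_injective V.ker_subtype
    let P : (ι → K) →ₗ[K] (ι → K) := V.subtype ∘ₗ g
    have hP : ∀ ζ ∈ V, ∀ p, ∑ r, ζ r * P (Pi.single r 1) p = ζ p := fun ζ hζ p => by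
      have hgζ : g ζ = ⟨ζ, hζ⟩ := LinearMap.congr_fun hg ⟨ζ, hζ⟩
      conv_rhs => rw [← show P ζ = ζ by simp [P, hgζ], pi_eq_sum_univ' ζ]
      simp
    have hWP : W = ∑ r, fun p => P (Pi.single r 1) p • W r := by
      funext p
      -- since the projection `P` fixes `V`
      have horth : ∀ ζ ∈ V, ζ ⬝ᵥ (Pi.single p 1 - fun r => P (Pi.single r 1) p) = 0 := by
        intro ζ hζ
        rw [dotProduct_sub, dotProduct_single, mul_one, dotProduct, hP ζ hζ, sub_self]
      exact sub_eq_zero.mp (by simpa [sub_smul, Pi.single_apply] using hW _ horth)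
    rw [hWP]
    exact Submodule.sum_mem _ fun r _ =>
      Submodule.subset_span ⟨_, (g (Pi.single r 1)).2, W r, rfl⟩

theorem mem_span_curry_iff {K ι κ M : Type*} [Semiring K] [AddCommMonoid M] [Module K M]
    (V : Submodule K (κ × ι → K)) (W : ι → κ → M) :
    W ∈ Submodule.span K {W' : ι → κ → M | ∃ ζ ∈ V, ∃ R : M, W' = fun a b => ζ (b, a) • R} ↔
      (fun p : κ × ι => W p.2 p.1) ∈
        Submodule.span K {w : κ × ι → M | ∃ ζ ∈ V, ∃ R : M, w = fun p => ζ p • R} := by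
  let e : (κ × ι → M) ≃ₗ[K] (ι → κ → M) :=
    (LinearEquiv.funCongrLeft K M (Equiv.prodComm ι κ)).trans (LinearEquiv.curry K M ι κ)
  have himage : {W' : ι → κ → M | ∃ ζ ∈ V, ∃ R : M, W' = fun a b => ζ (b, a) • R} =
      (e : (κ × ι → M) →ₗ[K] (ι → κ → M)) '' {w | ∃ ζ ∈ V, ∃ R : M, w = fun p => ζ p • R} := by
    ext W'
    constructor
    · rintro ⟨ζ, hζ, R, rfl⟩
      exact ⟨_, ⟨ζ, hζ, R, rfl⟩, rfl⟩
    · rintro ⟨_, ⟨ζ, hζ, R, rfl⟩, rfl⟩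
      exact ⟨ζ, hζ, R, rfl⟩
  rw [himage, Submodule.span_image, Submodule.mem_map_equiv]
  rfl

theorem Finset.sum_sum_sum_sum_comm {α β M : Type*} [AddCommMonoid M] (s : Finset α)
    (t : Finset β) (f : α → α → β → β → M) :
    ∑ x ∈ s, ∑ y ∈ s, ∑ a ∈ t, ∑ b ∈ t, f x y a b =
      ∑ a ∈ t, ∑ b ∈ t, ∑ x ∈ s, ∑ y ∈ s, f x y a b := by
  simp only [← Finset.sum_product' s s, ← Finset.sum_product' t t]
  exact Finset.sum_comm

section BlockOperators

variable {X : Type*} [Fintype X]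
  {H : Type*} [NormedAddCommGroup H] [InnerProductSpace ℂ H] [CompleteSpace H]

def blockPairing (u : X → X → (H →L[ℂ] H)) (ξ η : X × X → ℂ) : H →L[ℂ] H :=
  ∑ x : X, ∑ y : X, ∑ a : X, ∑ b : X,
    ((starRingEnd ℂ) (ξ (x, y)) * η (a, b)) • (u a x ∘L ContinuousLinearMap.adjoint (u b y))

/-- The blocks of `u (M_ξ ⊗ 1) u^*`, where `(M_ξ)_{x,y} = ξ (y, x)`. -/
def blockConj (u : X → X → (H →L[ℂ] H)) (ξ : X × X → ℂ) : X → X → (H →L[ℂ] H) :=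
  fun a b => ∑ x : X, ∑ y : X, ξ (y, x) • (u a x ∘L ContinuousLinearMap.adjoint (u b y))

theorem adjoint_blockPairing (u : X → X → (H →L[ℂ] H)) (ξ η : X × X → ℂ) :
    ContinuousLinearMap.adjoint (blockPairing u ξ η) =
      ∑ p : X × X, star (η p) • blockConj u ξ p.2 p.1 := by
  simp only [blockPairing, blockConj, map_sum, map_smulₛₗ, ContinuousLinearMap.adjoint_comp,
    ContinuousLinearMap.adjoint_adjoint, Fintype.sum_prod_type, Finset.smul_sum, smul_smul,
    map_mul, Complex.conj_conj]
  rw [Finset.sum_sum_sum_sum_comm]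
  refine Finset.sum_congr rfl fun a _ => Finset.sum_congr rfl fun b _ => ?_
  rw [Finset.sum_comm]
  simp only [mul_comm (ξ _)]
  rfl

theorem blockPairing_transpose (u : X → X → (H →L[ℂ] H)) (ξ η : X × X → ℂ) :
    blockPairing (fun a x => u x a) ξ η =
      ∑ x : X, ∑ y : X, ∑ a : X, ∑ b : X,
        (η (x, y) * (starRingEnd ℂ) (ξ (a, b))) •
          (u a x ∘L ContinuousLinearMap.adjoint (u b y)) := by
  rw [blockPairing, Finset.sum_sum_sum_sum_comm]
  simp only [mul_comm (η _)]

theorem forall_blockPairing_eq_zero_iff (V : Submodule ℂ (X × X → ℂ))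
    (u : X → X → (H →L[ℂ] H)) (ξ : X × X → ℂ) :
    (∀ η : X × X → ℂ, (∀ ζ ∈ V, ∑ p : X × X, (starRingEnd ℂ) (ζ p) * η p = 0) →
        blockPairing u ξ η = 0) ↔
      blockConj u ξ ∈ Submodule.span ℂ {W : X → X → (H →L[ℂ] H) |
        ∃ ζ ∈ V, ∃ R : H →L[ℂ] H, W = fun a b => ζ (b, a) • R} := by
  rw [mem_span_curry_iff, mem_span_smul_iff_forall_dotProduct]
  conv_rhs => rw [star_involutive.surjective.forall]
  refine forall_congr' fun η => imp_congr (forall₂_congr fun ζ _ => ?_) ?_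
  · change star ζ ⬝ᵥ η = 0 ↔ ζ ⬝ᵥ star η = 0
    rw [star_dotProduct, star_eq_zero, dotProduct_comm]
  · rw [← LinearIsometryEquiv.map_eq_zero_iff ContinuousLinearMap.adjoint,
      adjoint_blockPairing]
    rfl

end BlockOperators

theorem biunitary_orthogonality_iff_bimodule_inclusion_general
    {X : Type*} [Fintype X]
    {H : Type*} [NormedAddCommGroup H] [InnerProductSpace ℂ H] [CompleteSpace H]
    (𝒰 𝒱 : Submodule ℂ (X × X → ℂ))
    (U : X → X → (H →L[ℂ] H)) :
    ((∀ ξ ∈ 𝒰, ∀ η : X × X → ℂ,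
        (∀ ζ ∈ 𝒱, ∑ p : X × X, (starRingEnd ℂ) (ζ p) * η p = 0) →
        ∑ x : X, ∑ y : X, ∑ a : X, ∑ b : X,
          ((starRingEnd ℂ) (ξ (x, y)) * η (a, b)) •
            (U a x ∘L ContinuousLinearMap.adjoint (U b y)) = 0) ∧
     (∀ ξ' ∈ 𝒱, ∀ η' : X × X → ℂ,
        (∀ ζ ∈ 𝒰, ∑ p : X × X, (starRingEnd ℂ) (ζ p) * η' p = 0) →
        ∑ x : X, ∑ y : X, ∑ a : X, ∑ b : X,
          (η' (x, y) * (starRingEnd ℂ) (ξ' (a, b))) •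
            (U a x ∘L ContinuousLinearMap.adjoint (U b y)) = 0)) ↔
    ((∀ ξ ∈ 𝒰,
        (fun a b : X => ∑ x : X, ∑ y : X,
            ξ (y, x) • (U a x ∘L ContinuousLinearMap.adjoint (U b y))) ∈
          Submodule.span ℂ {W : X → X → (H →L[ℂ] H) |
            ∃ ζ ∈ 𝒱, ∃ R : H →L[ℂ] H, W = fun a b => ζ (b, a) • R}) ∧
     (∀ ξ' ∈ 𝒱,
        (fun a b : X => ∑ x : X, ∑ y : X,
            ξ' (y, x) • (U x a ∘L ContinuousLinearMap.adjoint (U y b))) ∈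
          Submodule.span ℂ {W : X → X → (H →L[ℂ] H) |
            ∃ ζ ∈ 𝒰, ∃ R : H →L[ℂ] H, W = fun a b => ζ (b, a) • R})) := by
  refine and_congr (forall₂_congr fun ξ _ => forall_blockPairing_eq_zero_iff 𝒱 U ξ)
    (forall₂_congr fun ξ' _ => ?_)
  simp only [← blockPairing_transpose]
  exact forall_blockPairing_eq_zero_iff 𝒰 (fun a x => U x a) ξ'

/-- For a bi-unitary `U`, the orthogonality relations between a quantum
graph `𝒰` and the complement of `𝒱` (and vice versa) are equivalent to the bimodule
inclusions `U(S̃_𝒰 ⊗ 1)U^* ⊆ S̃_𝒱 ⊗ B(H)` and `Uᵗ(S̃_𝒱 ⊗ 1)(Uᵗ)^* ⊆ S̃_𝒰 ⊗ B(H)`. -/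
theorem biunitary_orthogonality_iff_bimodule_inclusion
    {X : Type*} [Fintype X] [DecidableEq X]
    {H : Type*} [NormedAddCommGroup H] [InnerProductSpace ℂ H] [CompleteSpace H]
    (𝒰 𝒱 : Submodule ℂ (X × X → ℂ)) (hUg : IsQuantumGraph 𝒰) (hVg : IsQuantumGraph 𝒱)
    (U : X → X → (H →L[ℂ] H)) (hU : IsBiunitary U) :
    ((∀ ξ ∈ 𝒰, ∀ η : X × X → ℂ,
        (∀ ζ ∈ 𝒱, ∑ p : X × X, (starRingEnd ℂ) (ζ p) * η p = 0) →
        ∑ x : X, ∑ y : X, ∑ a : X, ∑ b : X,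
          ((starRingEnd ℂ) (ξ (x, y)) * η (a, b)) •
            (U a x ∘L ContinuousLinearMap.adjoint (U b y)) = 0) ∧
     (∀ ξ' ∈ 𝒱, ∀ η' : X × X → ℂ,
        (∀ ζ ∈ 𝒰, ∑ p : X × X, (starRingEnd ℂ) (ζ p) * η' p = 0) →
        ∑ x : X, ∑ y : X, ∑ a : X, ∑ b : X,
          (η' (x, y) * (starRingEnd ℂ) (ξ' (a, b))) •
            (U a x ∘L ContinuousLinearMap.adjoint (U b y)) = 0)) ↔
    ((∀ ξ ∈ 𝒰,
        (fun a b : X => ∑ x : X, ∑ y : X,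
            ξ (y, x) • (U a x ∘L ContinuousLinearMap.adjoint (U b y))) ∈
          Submodule.span ℂ {W : X → X → (H →L[ℂ] H) |
            ∃ ζ ∈ 𝒱, ∃ R : H →L[ℂ] H, W = fun a b => ζ (b, a) • R}) ∧
     (∀ ξ' ∈ 𝒱,
        (fun a b : X => ∑ x : X, ∑ y : X,
            ξ' (y, x) • (U x a ∘L ContinuousLinearMap.adjoint (U y b))) ∈
          Submodule.span ℂ {W : X → X → (H →L[ℂ] H) |
            ∃ ζ ∈ 𝒰, ∃ R : H →L[ℂ] H, W = fun a b => ζ (b, a) • R})) :=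
  biunitary_orthogonality_iff_bimodule_inclusion_general 𝒰 𝒱 U
end
end

section
/- Let X be a finite set and G, H simple graphs with vertex set X; set 𝒰_G := span{e_x⊗e_y : x ∼_G y} ⊆ ℂ^X⊗ℂ^X and 𝒰_H := span{e_a⊗e_b : a ∼_H b}. Then there exists a unitary matrix U ∈ M_X with (U⊗Ū)(𝒰_G) = 𝒰_H if and only if the graphs G and H are isomorphic. Here Ū denotes the entrywise complex conjugate of U and U⊗Ū acts on ℂ^X⊗ℂ^X. -/
/-!
A unitary `U` has nonzero determinant, so some permutation `σ` has `U (σ x) x ≠ 0` for all `x`.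
The `((a, b), (x, y))` entry of `U ⊗ Ū` is `U a x * conj (U b y)`, so if `U ⊗ Ū` maps `𝒰_G` into
`𝒰_H` then `x ∼_G y` forces `σ x ∼_H σ y`; applying the same argument to the inverse
`Uᴴ ⊗ conj Uᴴ`, whose entries have the same support pattern transposed, gives the converse,
so `σ` is an isomorphism. Conversely, the permutation matrix of an isomorphism does the job.
-/

open scoped Kronecker
open Matrix Equiv

namespace Matrix

variable {l m n R : Type*}

theorem kronecker_mulVec_single_one [CommSemiring R] [Fintype m] [Fintype n] [DecidableEq m]
    [DecidableEq n] (A : Matrix l m R) (B : Matrix l n R) (x : m) (y : n) :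
    (A ⊗ₖ B) *ᵥ Pi.single (x, y) 1 = fun p => A p.1 x * B p.2 y := by
  rw [mulVec_single_one]
  rfl

theorem exists_perm_forall_ne_zero_of_det_ne_zero [Fintype n] [DecidableEq n] [CommRing R]
    {M : Matrix n n R} (h : M.det ≠ 0) : ∃ σ : Perm n, ∀ i, M (σ i) i ≠ 0 := by
  contrapose! h
  rw [det_apply]
  refine Finset.sum_eq_zero fun σ _ => ?_
  obtain ⟨i, hi⟩ := h σ
  exact smul_eq_zero_of_right _ (Finset.prod_eq_zero (Finset.mem_univ i) hi)

theorem map_mulVecLin_eq_of_map_eq [Fintype n] [DecidableEq n] [CommSemiring R]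
    {M N : Matrix n n R} (h : N * M = 1) {S T : Submodule R (n → R)}
    (hST : S.map M.mulVecLin = T) : T.map N.mulVecLin = S := by
  rw [← hST, ← Submodule.map_comp, ← mulVecLin_mul, h, mulVecLin_one, Submodule.map_id]

theorem conjTranspose_kronecker_map_star_mul_self [Fintype n] [DecidableEq n] [CommRing R]
    [StarRing R] {U : Matrix n n R} (hU : Uᴴ * U = 1) :
    (Uᴴ ⊗ₖ Uᴴ.map (starRingEnd R)) * (U ⊗ₖ U.map (starRingEnd R)) = 1 := by
  rw [← mul_kronecker_mul, ← Matrix.map_mul, hU, Matrix.map_one _ (map_zero _) (map_one _),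
    one_kronecker_one]

theorem conjTranspose_permMatrix_mul_self [DecidableEq n] [Fintype n] [CommSemiring R]
    [StarRing R] (σ : Perm n) : (σ.permMatrix R)ᴴ * σ.permMatrix R = 1 := by
  rw [conjTranspose_permMatrix, ← permMatrix_mul, mul_inv_cancel, permMatrix_one]

end Matrix

namespace SimpleGraph

variable {X : Type*} [DecidableEq X]

/-- The subspace `𝒰_G`; `Pi.single (x, y) 1` is `e_x ⊗ e_y`. -/
def edgeSpan (R : Type*) [Semiring R] (G : SimpleGraph X) : Submodule R (X × X → R) :=
  Submodule.span R {v | ∃ x y, G.Adj x y ∧ v = Pi.single (x, y) 1}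

variable {G H : SimpleGraph X}

section Semiring

variable {R : Type*} [Semiring R]

theorem single_mem_edgeSpan {x y : X} (h : G.Adj x y) : Pi.single (x, y) 1 ∈ G.edgeSpan R :=
  Submodule.subset_span ⟨x, y, h, rfl⟩

theorem apply_eq_zero_of_mem_edgeSpan {v : X × X → R} (hv : v ∈ G.edgeSpan R) {a b : X}
    (hab : ¬G.Adj a b) : v (a, b) = 0 := by
  induction hv using Submodule.span_induction with
  | mem w hw =>
    obtain ⟨x, y, hxy, rfl⟩ := hw
    refine Pi.single_eq_of_ne ?_ _
    rintro ⟨⟩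
    exact hab hxy
  | zero => rfl
  | add _ _ _ _ hv hw => simp [hv, hw]
  | smul c _ _ hv => simp [hv]

theorem map_edgeSpan_eq_of_iso (φ : G ≃g H) {f : (X × X → R) →ₗ[R] X × X → R}
    (hf : ∀ a b, f (Pi.single (φ.symm a, φ.symm b) 1) = Pi.single (a, b) 1) :
    (G.edgeSpan R).map f = H.edgeSpan R := by
  rw [edgeSpan, Submodule.map_span]
  congr 1
  ext v
  constructor
  · rintro ⟨_, ⟨x, y, hxy, rfl⟩, rfl⟩
    exact ⟨φ x, φ y, φ.map_adj_iff.mpr hxy, by simpa using hf (φ x) (φ y)⟩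
  · rintro ⟨a, b, hab, rfl⟩
    exact ⟨_, ⟨φ.symm a, φ.symm b, φ.symm.map_adj_iff.mpr hab, rfl⟩, hf a b⟩

end Semiring

variable [Fintype X]

theorem map_edgeSpan_permMatrix {R : Type*} [CommSemiring R] [StarRing R] (φ : G ≃g H) :
    (G.edgeSpan R).map
      (Perm.permMatrix R φ.symm.toEquiv ⊗ₖ
        (Perm.permMatrix R φ.symm.toEquiv).map (starRingEnd R)).mulVecLin = H.edgeSpan R := by
  refine map_edgeSpan_eq_of_iso φ fun a b => ?_
  rw [mulVecLin_apply, kronecker_mulVec_single_one]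
  ext ⟨c, d⟩
  simp [Pi.single_apply, PEquiv.toMatrix_apply, ← ite_and, and_comm]

theorem adj_of_map_kronecker_le {R : Type*} [CommSemiring R] [NoZeroDivisors R]
    {A B : Matrix X X R} (hAB : (G.edgeSpan R).map (A ⊗ₖ B).mulVecLin ≤ H.edgeSpan R)
    {x y a b : X} (hxy : G.Adj x y) (ha : A a x ≠ 0) (hb : B b y ≠ 0) : H.Adj a b := by
  by_contra hab
  have h := apply_eq_zero_of_mem_edgeSpan
    (hAB (Submodule.mem_map_of_mem (single_mem_edgeSpan hxy))) hab
  rw [mulVecLin_apply, kronecker_mulVec_single_one] at h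
  exact mul_ne_zero ha hb h

theorem nonempty_iso_of_map_edgeSpan_eq {R : Type*} [CommRing R] [IsDomain R] [StarRing R]
    {U : Matrix X X R} (hU : Uᴴ * U = 1)
    (h : (G.edgeSpan R).map (U ⊗ₖ U.map (starRingEnd R)).mulVecLin = H.edgeSpan R) :
    Nonempty (G ≃g H) := by
  have hinv := map_mulVecLin_eq_of_map_eq (conjTranspose_kronecker_map_star_mul_self hU) h
  obtain ⟨σ, hσ⟩ :=
    exists_perm_forall_ne_zero_of_det_ne_zero (isUnit_det_of_left_inverse hU).ne_zero
  refine ⟨⟨σ, fun {x y} => ⟨fun hH => ?_, fun hG => ?_⟩⟩⟩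
  · exact adj_of_map_kronecker_le hinv.le hH (by simpa using hσ x)
      (by simpa [starRingEnd_apply] using hσ y)
  · exact adj_of_map_kronecker_le h.le hG (hσ x) (by simpa [starRingEnd_apply] using hσ y)

end SimpleGraph

open SimpleGraph

/-- There is a unitary `U ∈ M_X` with `(U ⊗ Ū)(𝒰_G) = 𝒰_H` if and only
if the graphs `G` and `H` are isomorphic. -/
theorem unitary_conjugation_iff_graph_iso
    {X : Type*} [Fintype X] [DecidableEq X] (G H : SimpleGraph X) :
    (∃ U : Matrix X X ℂ, Uᴴ * U = 1 ∧ U * Uᴴ = 1 ∧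
      Submodule.map (Matrix.mulVecLin (U ⊗ₖ U.map (starRingEnd ℂ)))
        (Submodule.span ℂ {v : X × X → ℂ |
          ∃ x y, G.Adj x y ∧ v = fun p => if p = (x, y) then 1 else 0}) =
      Submodule.span ℂ {v : X × X → ℂ |
          ∃ a b, H.Adj a b ∧ v = fun p => if p = (a, b) then 1 else 0}) ↔
    Nonempty (G ≃g H) := by
  simp only [← Pi.single_apply]
  change (∃ U : Matrix X X ℂ, _ ∧ _ ∧ (G.edgeSpan ℂ).map _ = H.edgeSpan ℂ) ↔ _
  refine ⟨fun ⟨U, hU, _, h⟩ => nonempty_iso_of_map_edgeSpan_eq hU h, fun ⟨φ⟩ => ?_⟩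
  have hP := conjTranspose_permMatrix_mul_self (R := ℂ) φ.symm.toEquiv
  exact ⟨_, hP, mul_eq_one_comm.mp hP, map_edgeSpan_permMatrix φ⟩
end

section
/- Fix n ∈ ℕ, let A_1 and A_2 be quantum adjacency matrices on (M_n, tr), and let S'_1, S'_2 ⊆ B(L²(M_n)) be the linear spans of the operators L_a∘A_1∘L_b and L_a∘A_2∘L_b respectively (a, b ∈ M_n), where L_a is left multiplication by a. Let K be a Hilbert space, U a unitary operator on L²(M_n)⊗K, and ρ : M_n → M_n⊗B(K) a unital *-homomorphism such that U(L_a⊗I_K)U^* = (π⊗id)(ρ(a)) for every a ∈ M_n, where π⊗id is the representation of M_n⊗B(K) on L²(M_n)⊗K sending c⊗R to L_c⊗R. If U(A_1⊗I_K)U^* = A_2⊗I_K, then U(T⊗I_K)U^* ∈ span{S⊗R : S ∈ S'_2, R ∈ B(K)} for every T ∈ S'_1. -/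
open scoped ComplexOrder
open Matrix

noncomputable section

/-- Matrix units in `M_n`. -/
def eps {n : ℕ} (i j : Fin n) : Matrix (Fin n) (Fin n) ℂ := Matrix.single i j 1

/-- A quantum adjacency matrix on `(M_n, tr)` (where `tr = Tr/n`). -/
def IsQAdj (n : ℕ) (A : Matrix (Fin n) (Fin n) ℂ →ₗ[ℂ] Matrix (Fin n) (Fin n) ℂ) : Prop :=
  (∀ a b : Matrix (Fin n) (Fin n) ℂ,
      Matrix.trace ((A a)ᴴ * b) / (n : ℂ) = Matrix.trace (aᴴ * A b) / (n : ℂ)) ∧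
  (∀ i j : Fin n, (n : ℂ) • ∑ k, A (eps i k) * A (eps k j) = A (eps i j)) ∧
  (∀ x : Matrix (Fin n) (Fin n) ℂ,
      A x = (n : ℂ) • ∑ i, ∑ j, (Matrix.trace (A (eps j i) * x) / (n : ℂ)) • eps i j) ∧
  (∀ i j : Fin n, (n : ℂ) • ∑ k, A (eps i k) * eps k j = 0)

/-!
In block form with respect to the basis `f`, the map `T ↦ U (T ⊗ 1) U^*` is multiplicative
because `U^* U = 1`, and block matrices of elementary tensors multiply as
`(S ⊗ R)(S' ⊗ R') = S S' ⊗ R R'`. Hence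
`U (L_a A₁ L_b ⊗ 1) U^* = (π ⊗ id)(ρ a) (A₂ ⊗ 1) (π ⊗ id)(ρ b)`, and expanding
`ρ a = ∑ ε_pq ⊗ (ρ a)_pq` turns this into `∑ L_{ε_pq} A₂ L_{ε_rs} ⊗ (ρ a)_pq (ρ b)_rs`.
-/

section Biorthogonal

variable {𝕜 V ι : Type*} [Field 𝕜] [AddCommGroup V] [Module 𝕜 V] [DecidableEq ι]

theorem linearIndependent_of_biorthogonal {v : ι → V} {g : ι → Module.Dual 𝕜 V}
    (hvg : ∀ i j, g i (v j) = if i = j then 1 else 0) : LinearIndependent 𝕜 v := by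
  refine LinearIndependent.of_comp (LinearMap.pi g) ?_
  have hcomp : ⇑(LinearMap.pi g) ∘ v = fun j => Pi.single j 1 := by
    ext j i
    simp [hvg, Pi.single_apply]
  rw [hcomp]
  exact Pi.linearIndependent_single_one ι 𝕜

variable [Fintype ι] [FiniteDimensional 𝕜 V]

def basisOfBiorthogonal (v : ι → V) (g : ι → Module.Dual 𝕜 V)
    (hvg : ∀ i j, g i (v j) = if i = j then 1 else 0)
    (hcard : Fintype.card ι = Module.finrank 𝕜 V) : Module.Basis ι 𝕜 V :=
  basisOfLinearIndependentOfCardEqFinrank' v (linearIndependent_of_biorthogonal hvg) hcard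

theorem basisOfBiorthogonal_repr_apply {v : ι → V} {g : ι → Module.Dual 𝕜 V}
    (hvg : ∀ i j, g i (v j) = if i = j then 1 else 0)
    (hcard : Fintype.card ι = Module.finrank 𝕜 V) (x : V) (i : ι) :
    (basisOfBiorthogonal v g hvg hcard).repr x i = g i x := by
  conv_rhs => rw [← (basisOfBiorthogonal v g hvg hcard).sum_repr x]
  simp [basisOfBiorthogonal, hvg]

theorem toMatrix_basisOfBiorthogonal_apply {v : ι → V} {g : ι → Module.Dual 𝕜 V}
    (hvg : ∀ i j, g i (v j) = if i = j then 1 else 0)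
    (hcard : Fintype.card ι = Module.finrank 𝕜 V) (T : V →ₗ[𝕜] V) (i j : ι) :
    LinearMap.toMatrix (basisOfBiorthogonal v g hvg hcard) (basisOfBiorthogonal v g hvg hcard) T
      i j = g i (T (v j)) := by
  rw [LinearMap.toMatrix_apply, basisOfBiorthogonal_repr_apply]
  simp [basisOfBiorthogonal]

end Biorthogonal

section BlockMatrix

variable {𝕜 E ι : Type*} [CommSemiring 𝕜] [Semiring E] [Algebra 𝕜 E] [Fintype ι]

theorem Matrix.map_smul_mul_map_smul (C D : Matrix ι ι 𝕜) (R S : E) :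
    C.map (· • R) * D.map (· • S) = (C * D).map (· • (R * S)) := by
  ext i j
  simp [Matrix.mul_apply, Finset.sum_smul, smul_smul, mul_comm]

variable [Star E] [DecidableEq ι] {V : Type*} [AddCommMonoid V] [Module 𝕜 V]

/-- The block matrix of `U (T ⊗ 1) U^*`, where `T ⊗ 1` has the scalar blocks
`LinearMap.toMatrix b b T k l • 1`. -/
def conjAmpliation (U : Matrix ι ι E) (b : Module.Basis ι 𝕜 V) :
    (V →ₗ[𝕜] V) →ₗ[𝕜] Matrix ι ι E :=
  LinearMap.mulLeft 𝕜 U ∘ₗ LinearMap.mulRight 𝕜 Uᴴ ∘ₗ (Algebra.linearMap 𝕜 E).mapMatrix ∘ₗ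
    (LinearMap.toMatrix b b).toLinearMap

theorem conjAmpliation_apply (U : Matrix ι ι E) (b : Module.Basis ι 𝕜 V) (T : V →ₗ[𝕜] V) :
    conjAmpliation U b T = U * (LinearMap.toMatrix b b T).map (algebraMap 𝕜 E) * Uᴴ := by
  simp [conjAmpliation, Matrix.mul_assoc, Algebra.coe_linearMap]

theorem conjAmpliation_apply_apply (U : Matrix ι ι E) (b : Module.Basis ι 𝕜 V) (T : V →ₗ[𝕜] V)
    (i j : ι) :
    conjAmpliation U b T i j =
      ∑ k, ∑ l, LinearMap.toMatrix b b T k l • (U i k * star (U j l)) := by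
  rw [conjAmpliation_apply, Matrix.mul_apply, Finset.sum_comm]
  simp [Matrix.mul_apply, Finset.sum_mul, Algebra.smul_def, Algebra.commutes, mul_assoc]

theorem conjAmpliation_comp {U : Matrix ι ι E} (hU : Uᴴ * U = 1) (b : Module.Basis ι 𝕜 V)
    (S T : V →ₗ[𝕜] V) :
    conjAmpliation U b (S ∘ₗ T) = conjAmpliation U b S * conjAmpliation U b T := by
  simp only [conjAmpliation_apply, LinearMap.toMatrix_comp b b b, Matrix.map_mul, Matrix.mul_assoc]
  rw [← Matrix.mul_assoc Uᴴ U, hU, Matrix.one_mul]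

end BlockMatrix

def traceInner (n : ℕ) (a : Matrix (Fin n) (Fin n) ℂ) :
    Module.Dual ℂ (Matrix (Fin n) (Fin n) ℂ) :=
  (n : ℂ)⁻¹ • (Matrix.traceLinearMap (Fin n) ℂ ℂ ∘ₗ LinearMap.mulLeft ℂ aᴴ)

theorem traceInner_apply (n : ℕ) (a x : Matrix (Fin n) (Fin n) ℂ) :
    traceInner n a x = Matrix.trace (aᴴ * x) / n := by
  simp [traceInner, div_eq_inv_mul]

def basisOfTraceOrthonormal {n : ℕ} (f : Fin (n ^ 2) → Matrix (Fin n) (Fin n) ℂ)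
    (hON : ∀ i j, Matrix.trace ((f i)ᴴ * f j) / (n : ℂ) = if i = j then 1 else 0) :
    Module.Basis (Fin (n ^ 2)) ℂ (Matrix (Fin n) (Fin n) ℂ) :=
  basisOfBiorthogonal f (fun i => traceInner n (f i)) (by simpa only [traceInner_apply] using hON)
    (by simp [Module.finrank_matrix, sq])

theorem toMatrix_basisOfTraceOrthonormal_apply {n : ℕ}
    {f : Fin (n ^ 2) → Matrix (Fin n) (Fin n) ℂ}
    (hON : ∀ i j, Matrix.trace ((f i)ᴴ * f j) / (n : ℂ) = if i = j then 1 else 0)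
    (T : Matrix (Fin n) (Fin n) ℂ →ₗ[ℂ] Matrix (Fin n) (Fin n) ℂ) (i j : Fin (n ^ 2)) :
    LinearMap.toMatrix (basisOfTraceOrthonormal f hON) (basisOfTraceOrthonormal f hON) T i j =
      Matrix.trace ((f i)ᴴ * T (f j)) / n := by
  rw [basisOfTraceOrthonormal, toMatrix_basisOfBiorthogonal_apply, traceInner_apply]

section HilbertSpace

variable {K : Type*} [NormedAddCommGroup K] [InnerProductSpace ℂ K] [CompleteSpace K]

theorem Matrix.conjTranspose_of_mul_of_eq_one {ι : Type*} [Fintype ι] [DecidableEq ι]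
    {u : ι → ι → (K →L[ℂ] K)}
    (hu : ∀ i j, ∑ k, ContinuousLinearMap.adjoint (u k i) ∘L u k j =
      if i = j then (1 : K →L[ℂ] K) else 0) :
    (Matrix.of u)ᴴ * Matrix.of u = 1 :=
  Matrix.ext fun i j => by
    simpa only [Matrix.mul_apply, Matrix.one_apply, Matrix.conjTranspose_apply, Matrix.of_apply,
      ContinuousLinearMap.star_eq_adjoint, ContinuousLinearMap.mul_def] using hu i j

theorem conjAmpliation_basisOfTraceOrthonormal_apply {n : ℕ}
    {f : Fin (n ^ 2) → Matrix (Fin n) (Fin n) ℂ}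
    (hON : ∀ i j, Matrix.trace ((f i)ᴴ * f j) / (n : ℂ) = if i = j then 1 else 0)
    (u : Fin (n ^ 2) → Fin (n ^ 2) → (K →L[ℂ] K))
    (T : Matrix (Fin n) (Fin n) ℂ →ₗ[ℂ] Matrix (Fin n) (Fin n) ℂ) (i j : Fin (n ^ 2)) :
    conjAmpliation (Matrix.of u) (basisOfTraceOrthonormal f hON) T i j =
      ∑ k, ∑ l, (Matrix.trace ((f k)ᴴ * T (f l)) / (n : ℂ)) •
        (u i k ∘L ContinuousLinearMap.adjoint (u j l)) := by
  simp only [conjAmpliation_apply_apply, toMatrix_basisOfTraceOrthonormal_apply, Matrix.of_apply,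
    ContinuousLinearMap.star_eq_adjoint, ContinuousLinearMap.mul_def]

end HilbertSpace

theorem conjugation_maps_bimodule_general {n : ℕ}
    (A₁ A₂ : Matrix (Fin n) (Fin n) ℂ →ₗ[ℂ] Matrix (Fin n) (Fin n) ℂ)
    (f : Fin (n ^ 2) → Matrix (Fin n) (Fin n) ℂ)
    (hON : ∀ i j, Matrix.trace ((f i)ᴴ * f j) / (n : ℂ) = if i = j then 1 else 0)
    {K : Type*} [NormedAddCommGroup K] [InnerProductSpace ℂ K] [CompleteSpace K]
    (u : Fin (n ^ 2) → Fin (n ^ 2) → (K →L[ℂ] K))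
    -- `U` is unitary:
    (hu1 : ∀ i j, ∑ k, ContinuousLinearMap.adjoint (u k i) ∘L u k j =
        if i = j then (1 : K →L[ℂ] K) else 0)
    (ρ : Matrix (Fin n) (Fin n) ℂ →ₗ[ℂ] Matrix (Fin n) (Fin n) (K →L[ℂ] K))
    -- `U (L_a ⊗ I) U^* = (π ⊗ id)(ρ(a))` for every `a ∈ M_n`:
    (hconj : ∀ (a : Matrix (Fin n) (Fin n) ℂ) (i j : Fin (n ^ 2)),
      ∑ k, ∑ l, (Matrix.trace ((f k)ᴴ * (a * f l)) / (n : ℂ)) •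
          (u i k ∘L ContinuousLinearMap.adjoint (u j l)) =
        ∑ p, ∑ q, (Matrix.trace ((f i)ᴴ * (eps p q * f j)) / (n : ℂ)) • ρ a p q)
    -- `U (A₁ ⊗ I) U^* = A₂ ⊗ I`:
    (hint : ∀ i j, ∑ k, ∑ l, (Matrix.trace ((f k)ᴴ * A₁ (f l)) / (n : ℂ)) •
          (u i k ∘L ContinuousLinearMap.adjoint (u j l)) =
        (Matrix.trace ((f i)ᴴ * A₂ (f j)) / (n : ℂ)) • (1 : K →L[ℂ] K)) :
    ∀ T ∈ Submodule.span ℂ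
        {T : Matrix (Fin n) (Fin n) ℂ →ₗ[ℂ] Matrix (Fin n) (Fin n) ℂ |
          ∃ a b : Matrix (Fin n) (Fin n) ℂ,
            T = LinearMap.mulLeft ℂ a ∘ₗ A₁ ∘ₗ LinearMap.mulLeft ℂ b},
      (fun i j : Fin (n ^ 2) => ∑ k, ∑ l,
          (Matrix.trace ((f k)ᴴ * T (f l)) / (n : ℂ)) •
            (u i k ∘L ContinuousLinearMap.adjoint (u j l))) ∈
        Submodule.span ℂ {W : Fin (n ^ 2) → Fin (n ^ 2) → (K →L[ℂ] K) |
          ∃ S ∈ Submodule.span ℂ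
            {S : Matrix (Fin n) (Fin n) ℂ →ₗ[ℂ] Matrix (Fin n) (Fin n) ℂ |
              ∃ a b : Matrix (Fin n) (Fin n) ℂ,
                S = LinearMap.mulLeft ℂ a ∘ₗ A₂ ∘ₗ LinearMap.mulLeft ℂ b},
            ∃ R : K →L[ℂ] K,
              W = fun i j => (Matrix.trace ((f i)ᴴ * S (f j)) / (n : ℂ)) • R} := by
  set b := basisOfTraceOrthonormal f hON
  set U : Matrix (Fin (n ^ 2)) (Fin (n ^ 2)) (K →L[ℂ] K) := Matrix.of u
  have hblock : ∀ T, conjAmpliation U b T = fun i j => ∑ k, ∑ l,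
      (Matrix.trace ((f k)ᴴ * T (f l)) / (n : ℂ)) •
        (u i k ∘L ContinuousLinearMap.adjoint (u j l)) :=
    fun T => funext₂ (conjAmpliation_basisOfTraceOrthonormal_apply hON u T)
  have hL : ∀ a, conjAmpliation U b (LinearMap.mulLeft ℂ a) =
      ∑ p, ∑ q, (LinearMap.toMatrix b b (LinearMap.mulLeft ℂ (eps p q))).map (· • ρ a p q) :=
    fun a => (hblock _).trans <| Matrix.ext fun i j => by
      simpa only [b, toMatrix_basisOfTraceOrthonormal_apply, Matrix.sum_apply, Matrix.map_apply,
        LinearMap.mulLeft_apply] using hconj a i j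
  have hA : conjAmpliation U b A₁ = (LinearMap.toMatrix b b A₂).map (· • 1) :=
    (hblock _).trans <| Matrix.ext fun i j => by
      simpa only [b, toMatrix_basisOfTraceOrthonormal_apply, Matrix.map_apply] using hint i j
  intro T hT
  rw [← hblock]
  refine (Submodule.span_le (p := (Submodule.span ℂ _).comap (conjAmpliation U b))).mpr ?_ hT
  rintro _ ⟨a, c, rfl⟩
  have hgen : conjAmpliation U b (LinearMap.mulLeft ℂ a ∘ₗ A₁ ∘ₗ LinearMap.mulLeft ℂ c) =
      ∑ p, ∑ q, ∑ r, ∑ s, (LinearMap.toMatrix b b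
        (LinearMap.mulLeft ℂ (eps p q) ∘ₗ A₂ ∘ₗ LinearMap.mulLeft ℂ (eps r s))).map
          (· • (ρ a p q * ρ c r s)) := by
    have hU : Uᴴ * U = 1 := Matrix.conjTranspose_of_mul_of_eq_one hu1
    rw [conjAmpliation_comp hU, conjAmpliation_comp hU, hL, hA, hL]
    simp only [Finset.sum_mul]
    simp only [Finset.mul_sum, Matrix.map_smul_mul_map_smul, one_mul, ← LinearMap.toMatrix_comp]
  rw [SetLike.mem_coe, Submodule.mem_comap, hgen]
  refine Submodule.sum_mem _ fun p _ => Submodule.sum_mem _ fun q _ =>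
    Submodule.sum_mem _ fun r _ => Submodule.sum_mem _ fun s _ => Submodule.subset_span
      ⟨_, Submodule.subset_span ⟨eps p q, eps r s, rfl⟩, ρ a p q * ρ c r s,
        funext₂ fun i j => ?_⟩
  simp only [Matrix.map_apply, b, toMatrix_basisOfTraceOrthonormal_apply]

/-- Let `A₁, A₂` be quantum adjacency matrices on `(M_n, tr)`, with
`S'_r` the `M_n`-bimodule generated by `A_r` in `B(L²(M_n))`.  Let `U` be a unitary
on `L²(M_n) ⊗ K` (identified with `⊕_{i=1}^{n²} K` via an orthonormal basis `{Λ(f_i)}`,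
with block entries `u_{i,j}`) such that `U(L_a ⊗ I)U^* = (π ⊗ id)(ρ(a))` for a unital
*-homomorphism `ρ : M_n → M_n ⊗ B(K)`.  If `U(A₁ ⊗ I)U^* = A₂ ⊗ I`, then
`U(T ⊗ I)U^* ∈ span{S ⊗ R : S ∈ S'_2, R ∈ B(K)}` for every `T ∈ S'_1`. -/
theorem conjugation_maps_bimodule {n : ℕ}
    (A₁ A₂ : Matrix (Fin n) (Fin n) ℂ →ₗ[ℂ] Matrix (Fin n) (Fin n) ℂ)
    (hA₁ : IsQAdj n A₁) (hA₂ : IsQAdj n A₂)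
    (f : Fin (n ^ 2) → Matrix (Fin n) (Fin n) ℂ)
    (hON : ∀ i j, Matrix.trace ((f i)ᴴ * f j) / (n : ℂ) = if i = j then 1 else 0)
    {K : Type*} [NormedAddCommGroup K] [InnerProductSpace ℂ K] [CompleteSpace K]
    (u : Fin (n ^ 2) → Fin (n ^ 2) → (K →L[ℂ] K))
    -- `U` is unitary:
    (hu1 : ∀ i j, ∑ k, ContinuousLinearMap.adjoint (u k i) ∘L u k j =
        if i = j then (1 : K →L[ℂ] K) else 0)
    (hu2 : ∀ i j, ∑ k, u i k ∘L ContinuousLinearMap.adjoint (u j k) =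
        if i = j then (1 : K →L[ℂ] K) else 0)
    -- `ρ` is a unital *-homomorphism:
    (ρ : Matrix (Fin n) (Fin n) ℂ →ₗ[ℂ] Matrix (Fin n) (Fin n) (K →L[ℂ] K))
    (hmul : ∀ a b, ρ (a * b) = ρ a * ρ b)
    (hstar : ∀ a, ρ (aᴴ) = (ρ a)ᴴ)
    (hone : ρ 1 = 1)
    -- `U (L_a ⊗ I) U^* = (π ⊗ id)(ρ(a))` for every `a ∈ M_n`:
    (hconj : ∀ (a : Matrix (Fin n) (Fin n) ℂ) (i j : Fin (n ^ 2)),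
      ∑ k, ∑ l, (Matrix.trace ((f k)ᴴ * (a * f l)) / (n : ℂ)) •
          (u i k ∘L ContinuousLinearMap.adjoint (u j l)) =
        ∑ p, ∑ q, (Matrix.trace ((f i)ᴴ * (eps p q * f j)) / (n : ℂ)) • ρ a p q)
    -- `U (A₁ ⊗ I) U^* = A₂ ⊗ I`:
    (hint : ∀ i j, ∑ k, ∑ l, (Matrix.trace ((f k)ᴴ * A₁ (f l)) / (n : ℂ)) •
          (u i k ∘L ContinuousLinearMap.adjoint (u j l)) =
        (Matrix.trace ((f i)ᴴ * A₂ (f j)) / (n : ℂ)) • (1 : K →L[ℂ] K)) :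
    ∀ T ∈ Submodule.span ℂ
        {T : Matrix (Fin n) (Fin n) ℂ →ₗ[ℂ] Matrix (Fin n) (Fin n) ℂ |
          ∃ a b : Matrix (Fin n) (Fin n) ℂ,
            T = LinearMap.mulLeft ℂ a ∘ₗ A₁ ∘ₗ LinearMap.mulLeft ℂ b},
      (fun i j : Fin (n ^ 2) => ∑ k, ∑ l,
          (Matrix.trace ((f k)ᴴ * T (f l)) / (n : ℂ)) •
            (u i k ∘L ContinuousLinearMap.adjoint (u j l))) ∈
        Submodule.span ℂ {W : Fin (n ^ 2) → Fin (n ^ 2) → (K →L[ℂ] K) |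
          ∃ S ∈ Submodule.span ℂ
            {S : Matrix (Fin n) (Fin n) ℂ →ₗ[ℂ] Matrix (Fin n) (Fin n) ℂ |
              ∃ a b : Matrix (Fin n) (Fin n) ℂ,
                S = LinearMap.mulLeft ℂ a ∘ₗ A₂ ∘ₗ LinearMap.mulLeft ℂ b},
            ∃ R : K →L[ℂ] K,
              W = fun i j => (Matrix.trace ((f i)ᴴ * S (f j)) / (n : ℂ)) • R} :=
  conjugation_maps_bimodule_general A₁ A₂ f hON u hu1 ρ hconj hint
end
end

section
/- Let X be a finite set, H a Hilbert space, and U = (U_{a,x})_{a,x∈X} a block operator matrix with entries in B(H) such that: U is a unitary operator on the direct sum of X copies of H; ∑_{y∈X} U_{a,y}^* U_{a',y} = δ_{a,a'}·I_H for all a,a' ∈ X; and U_{b,y}^* ( ∑_{a∈X} U_{a,x} U_{a,x'}^* − δ_{x,x'}·I_H ) U_{c,z} = 0 for all x,x',y,z,b,c ∈ X. Then the transposed block matrix U^t := (U_{x,a})_{a,x∈X} (whose (a,x) entry is U_{x,a}) is also unitary; that is, U is a bi-unitary. -/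
/-!
The first half of the conclusion is the hypothesis `ht`. For the second, put
`D = ∑_b U_{b,a} U_{b,a'}^* − δ_{a,a'}`. Row `a` of the unitary `U` is a co-isometry,
`∑_y U_{a,y} U_{a,y}^* = 1`, so the ranges of the `U_{a,y}` span `H` and the
`U_{a,y}^*` jointly separate points. Hence `U_{a,y}^* D U_{c,z} = 0` for all `y` forces
`D U_{c,z} = 0`, and `D U_{a,z} = 0` for all `z` forces `D = 0`.
-/

open ContinuousLinearMap

section CoIsometryRow

variable {𝕜 ι E F G : Type*} [RCLike 𝕜] [Fintype ι]
  [NormedAddCommGroup E] [InnerProductSpace 𝕜 E] [CompleteSpace E]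
  [NormedAddCommGroup F] [InnerProductSpace 𝕜 F] [CompleteSpace F]
  [NormedAddCommGroup G] [NormedSpace 𝕜 G]
  {V : ι → E →L[𝕜] F}

theorem eq_zero_of_adjoint_comp_eq_zero (hV : ∑ i, V i ∘L adjoint (V i) = 1)
    {T : G →L[𝕜] F} (hT : ∀ i, adjoint (V i) ∘L T = 0) : T = 0 :=
  calc T = (∑ i, V i ∘L adjoint (V i)) ∘L T := by rw [hV, one_def, id_comp]
    _ = 0 := by simp only [finsetSum_comp, comp_assoc, hT, comp_zero, Finset.sum_const_zero]

theorem eq_zero_of_comp_eq_zero (hV : ∑ i, V i ∘L adjoint (V i) = 1)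
    {T : F →L[𝕜] G} (hT : ∀ i, T ∘L V i = 0) : T = 0 :=
  calc T = T ∘L ∑ i, V i ∘L adjoint (V i) := by rw [hV, one_def, comp_id]
    _ = 0 := by simp only [comp_finsetSum, ← comp_assoc, hT, zero_comp, Finset.sum_const_zero]

end CoIsometryRow

theorem biunitary_of_relations_general
    {X : Type*} [Fintype X] [DecidableEq X]
    {H : Type*} [NormedAddCommGroup H] [InnerProductSpace ℂ H] [CompleteSpace H]
    (U : X → X → (H →L[ℂ] H))
    (hU2 : ∀ a a' : X, ∑ x : X, U a x ∘L ContinuousLinearMap.adjoint (U a' x) =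
        if a = a' then (1 : H →L[ℂ] H) else 0)
    (ht : ∀ a a' : X, ∑ y : X, ContinuousLinearMap.adjoint (U a y) ∘L U a' y =
        if a = a' then (1 : H →L[ℂ] H) else 0)
    (hcomp : ∀ x x' y z b c : X,
      ContinuousLinearMap.adjoint (U b y) ∘L
          ((∑ a : X, U a x ∘L ContinuousLinearMap.adjoint (U a x')) -
            (if x = x' then (1 : H →L[ℂ] H) else 0)) ∘L U c z = 0) :
    (∀ x x' : X, ∑ a : X, ContinuousLinearMap.adjoint (U x a) ∘L U x' a =
        if x = x' then (1 : H →L[ℂ] H) else 0) ∧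
    (∀ a a' : X, ∑ x : X, U x a ∘L ContinuousLinearMap.adjoint (U x a') =
        if a = a' then (1 : H →L[ℂ] H) else 0) := by
  refine ⟨ht, fun a a' => sub_eq_zero.mp ?_⟩
  have hrow : ∑ y, U a y ∘L adjoint (U a y) = 1 := by simpa using hU2 a a
  have hD_comp (c z : X) :
      ((∑ b, U b a ∘L adjoint (U b a')) - if a = a' then 1 else 0) ∘L U c z = 0 :=
    eq_zero_of_adjoint_comp_eq_zero hrow fun y => hcomp a a' y z a c
  exact eq_zero_of_comp_eq_zero hrow (hD_comp a)

/-- If the block operator matrix `U = (U_{a,x})` is unitary, its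
transpose is an isometry, and the compressions `U_{b,y}^* (∑_a U_{a,x}U_{a,x'}^* − δ_{x,x'}) U_{c,z}`
all vanish, then the transpose of `U` is also unitary, i.e. `U` is a bi-unitary. -/
theorem biunitary_of_relations
    {X : Type*} [Fintype X] [DecidableEq X]
    {H : Type*} [NormedAddCommGroup H] [InnerProductSpace ℂ H] [CompleteSpace H]
    (U : X → X → (H →L[ℂ] H))
    (hU1 : ∀ x x' : X, ∑ a : X, ContinuousLinearMap.adjoint (U a x) ∘L U a x' =
        if x = x' then (1 : H →L[ℂ] H) else 0)
    (hU2 : ∀ a a' : X, ∑ x : X, U a x ∘L ContinuousLinearMap.adjoint (U a' x) =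
        if a = a' then (1 : H →L[ℂ] H) else 0)
    (ht : ∀ a a' : X, ∑ y : X, ContinuousLinearMap.adjoint (U a y) ∘L U a' y =
        if a = a' then (1 : H →L[ℂ] H) else 0)
    (hcomp : ∀ x x' y z b c : X,
      ContinuousLinearMap.adjoint (U b y) ∘L
          ((∑ a : X, U a x ∘L ContinuousLinearMap.adjoint (U a x')) -
            (if x = x' then (1 : H →L[ℂ] H) else 0)) ∘L U c z = 0) :
    (∀ x x' : X, ∑ a : X, ContinuousLinearMap.adjoint (U x a) ∘L U x' a =
        if x = x' then (1 : H →L[ℂ] H) else 0) ∧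
    (∀ a a' : X, ∑ x : X, U x a ∘L ContinuousLinearMap.adjoint (U x a') =
        if a = a' then (1 : H →L[ℂ] H) else 0) :=
  biunitary_of_relations_general U hU2 ht hcomp
end

section
/- Fix n ∈ ℕ and let {f_i}_{i=1}^{n²} ⊆ M_n be an orthonormal basis of M_n with respect to the inner product ⟨a,b⟩ = tr(a^*b). Let H be a Hilbert space and p_{i,j} ∈ B(H) (1 ≤ i,j ≤ n²) be such that the linear map ρ : M_n → M_n⊗B(H) determined by ρ(f_i) = ∑_{j=1}^{n²} f_j⊗p_{j,i} is a unital *-homomorphism satisfying (tr⊗id)(ρ(a)) = tr(a)·I_H for all a ∈ M_n. Then both the block operator matrix P = (p_{i,j})_{i,j=1}^{n²} and its transpose P^t = (p_{j,i})_{i,j=1}^{n²} are unitary operators on the Hilbert space direct sum of n² copies of H; that is, P is a bi-unitary. -/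
/-! Applying the trace condition to `ρ (f_iᴴ f_j)` and `ρ (f_i f_jᴴ)` and using orthonormality
gives `Pᴴ P = 1` and `Pᵀ Pᵀᴴ = 1`: both `P` and `Pᵀᴴ` are isometries. Since
`trace (P Pᴴ) = trace (Pᵀ Pᵀᴴ)` even over the noncommutative ring `B(H)`, the projection
`1 - P Pᴴ` has zero trace, and in a C⋆-algebra `trace (Qᴴ Q) = ∑ star (Q i j) * Q i j = 0`
forces `Q = 0`; so `P Pᴴ = 1`, and likewise `Pᵀᴴ Pᵀ = 1`. -/

open scoped ComplexOrder
open Matrix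

noncomputable section

namespace Matrix

variable {m R A : Type*}

theorem trace_conjTranspose_mul_self_eq_zero_iff_of_cStarRing [Fintype m]
    [NonUnitalNormedRing A] [StarRing A] [CStarRing A] [PartialOrder A] [StarOrderedRing A]
    {V : Matrix m m A} :
    (Vᴴ * V).trace = 0 ↔ V = 0 := by
  rw [← star_vec_dotProduct_vec, dotProduct, Pi.star_def,
    Fintype.sum_eq_zero_iff_of_nonneg fun _ => star_mul_self_nonneg _, ← vec_eq_zero_iff,
    funext_iff, funext_iff]
  simp only [Pi.zero_apply, CStarRing.star_mul_self_eq_zero_iff]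

theorem mul_conjTranspose_eq_one_of_trace_eq [Fintype m] [DecidableEq m] [NormedRing A]
    [StarRing A] [CStarRing A] [PartialOrder A] [StarOrderedRing A] {V : Matrix m m A}
    (hV : Vᴴ * V = 1) (htr : (V * Vᴴ).trace = (1 : Matrix m m A).trace) : V * Vᴴ = 1 := by
  have hproj : V * Vᴴ * (V * Vᴴ) = V * Vᴴ := by rw [mul_assoc, ← mul_assoc Vᴴ, hV, one_mul]
  have hsa : (1 - V * Vᴴ)ᴴ = 1 - V * Vᴴ := by
    rw [conjTranspose_sub, conjTranspose_one, conjTranspose_mul, conjTranspose_conjTranspose]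
  have hsq : (1 - V * Vᴴ)ᴴ * (1 - V * Vᴴ) = 1 - V * Vᴴ := by
    rw [hsa, mul_sub, mul_one, sub_mul, one_mul, hproj, sub_self, sub_zero]
  rw [eq_comm, ← sub_eq_zero, ← trace_conjTranspose_mul_self_eq_zero_iff_of_cStarRing, hsq,
    trace_sub, htr, sub_self]

def smulRight [SMul R A] (a : Matrix m m R) (x : A) : Matrix m m A :=
  of fun r s => a r s • x

variable [CommSemiring R] [Semiring A] [Algebra R A]

theorem trace_smulRight [Fintype m] (a : Matrix m m R) (x : A) :
    (a.smulRight x).trace = a.trace • x :=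
  (Finset.sum_smul (s := Finset.univ) (f := a.diag) (x := x)).symm

theorem smulRight_mul_smulRight [Fintype m] (a b : Matrix m m R) (x y : A) :
    a.smulRight x * b.smulRight y = (a * b).smulRight (x * y) := by
  ext r s
  simp only [smulRight, mul_apply, of_apply, smul_mul_smul_comm, Finset.sum_smul]

theorem conjTranspose_smulRight [StarRing R] [StarRing A] [StarModule R A] (a : Matrix m m R)
    (x : A) : (a.smulRight x)ᴴ = aᴴ.smulRight (star x) := by
  ext r s
  simp only [smulRight, conjTranspose_apply, of_apply, star_smul]

end Matrix

section TracePreserving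

variable {n : ℕ} {ι A : Type*} [Fintype ι] [Ring A] [Algebra ℂ A]
  {f : ι → Matrix (Fin n) (Fin n) ℂ} {p : ι → ι → A}
  {ρ : Matrix (Fin n) (Fin n) ℂ →ₗ[ℂ] Matrix (Fin n) (Fin n) A}

theorem smul_sum_trace_smul_eq_sum_diag {M : Type*} [AddCommGroup M] [Module ℂ M]
    [DecidableEq ι] (hON : ∀ i j, trace ((f i)ᴴ * f j) / (n : ℂ) = if i = j then 1 else 0)
    (x : ι → ι → M) :
    (n : ℂ)⁻¹ • ∑ k, ∑ l, trace ((f k)ᴴ * f l) • x k l = ∑ k, x k k := by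
  simp only [Finset.smul_sum, smul_smul, inv_mul_eq_div, hON, ite_smul, one_smul, zero_smul,
    Finset.sum_ite_eq, Finset.mem_univ, if_true]

variable [StarRing A] [StarModule ℂ A] (hval : ∀ i, ρ (f i) = ∑ j, (f j).smulRight (p j i))
  (hmul : ∀ a b, ρ (a * b) = ρ a * ρ b) (hstar : ∀ a, ρ aᴴ = (ρ a)ᴴ)
include hval hmul hstar

theorem trace_map_conjTranspose_mul (i j : ι) :
    trace (ρ ((f i)ᴴ * f j)) = ∑ k, ∑ l, trace ((f k)ᴴ * f l) • (star (p k i) * p l j) := by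
  simp only [hmul, hstar, hval, conjTranspose_sum, Finset.sum_mul_sum, trace_sum,
    conjTranspose_smulRight, smulRight_mul_smulRight, trace_smulRight]

theorem trace_map_mul_conjTranspose (i j : ι) :
    trace (ρ (f i * (f j)ᴴ)) = ∑ k, ∑ l, trace (f k * (f l)ᴴ) • (p k i * star (p l j)) := by
  simp only [hmul, hstar, hval, conjTranspose_sum, Finset.sum_mul_sum, trace_sum,
    conjTranspose_smulRight, smulRight_mul_smulRight, trace_smulRight]

variable [DecidableEq ι]
  (hON : ∀ i j, trace ((f i)ᴴ * f j) / (n : ℂ) = if i = j then 1 else 0)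
  (htr : ∀ a, (n : ℂ)⁻¹ • trace (ρ a) = (trace a / (n : ℂ)) • (1 : A))
include hON htr

theorem conjTranspose_mul_self_eq_one_of_trace_preserving : (of p)ᴴ * of p = 1 := by
  ext i j
  have h := htr ((f i)ᴴ * f j)
  rw [trace_map_conjTranspose_mul hval hmul hstar, smul_sum_trace_smul_eq_sum_diag hON,
    hON, ite_smul, one_smul, zero_smul] at h
  simpa [mul_apply, one_apply] using h

theorem transpose_mul_conjTranspose_eq_one_of_trace_preserving : (of p)ᵀ * (of p)ᵀᴴ = 1 := by
  ext i j
  have h := htr (f i * (f j)ᴴ)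
  simp_rw [trace_map_mul_conjTranspose hval hmul hstar, trace_mul_comm (f i),
    trace_mul_comm (f _)] at h
  rw [Finset.sum_comm, smul_sum_trace_smul_eq_sum_diag hON, hON, ite_smul, one_smul,
    zero_smul] at h
  simpa [mul_apply, one_apply, eq_comm] using h

end TracePreserving

theorem rho_star_hom_gives_biunitary_general
    {n : ℕ} (f : Fin (n ^ 2) → Matrix (Fin n) (Fin n) ℂ)
    (hON : ∀ i j, Matrix.trace ((f i)ᴴ * f j) / (n : ℂ) = if i = j then 1 else 0)
    {H : Type*} [NormedAddCommGroup H] [InnerProductSpace ℂ H] [CompleteSpace H]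
    (p : Fin (n ^ 2) → Fin (n ^ 2) → (H →L[ℂ] H))
    (ρ : Matrix (Fin n) (Fin n) ℂ →ₗ[ℂ] Matrix (Fin n) (Fin n) (H →L[ℂ] H))
    (hval : ∀ i, ρ (f i) = ∑ j, Matrix.of fun r s => f j r s • p j i)
    (hmul : ∀ a b, ρ (a * b) = ρ a * ρ b)
    (hstar : ∀ a, ρ (aᴴ) = (ρ a)ᴴ)
    (htr : ∀ a, ((n : ℂ))⁻¹ • ∑ i, ρ a i i =
      (Matrix.trace a / (n : ℂ)) • (1 : H →L[ℂ] H)) :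
    (∀ i j, ∑ k, ContinuousLinearMap.adjoint (p k i) ∘L p k j =
        if i = j then (1 : H →L[ℂ] H) else 0) ∧
    (∀ i j, ∑ k, p i k ∘L ContinuousLinearMap.adjoint (p j k) =
        if i = j then (1 : H →L[ℂ] H) else 0) ∧
    (∀ i j, ∑ k, ContinuousLinearMap.adjoint (p i k) ∘L p j k =
        if i = j then (1 : H →L[ℂ] H) else 0) ∧
    (∀ i j, ∑ k, p k i ∘L ContinuousLinearMap.adjoint (p k j) =
        if i = j then (1 : H →L[ℂ] H) else 0) := by
  set P := of p
  have hPiso : Pᴴ * P = 1 :=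
    conjTranspose_mul_self_eq_one_of_trace_preserving hval hmul hstar hON htr
  have hTcoiso : Pᵀ * Pᵀᴴ = 1 :=
    transpose_mul_conjTranspose_eq_one_of_trace_preserving hval hmul hstar hON htr
  have hPcoiso : P * Pᴴ = 1 := mul_conjTranspose_eq_one_of_trace_eq hPiso <| by
    rw [← trace_transpose_mul, ← conjTranspose_transpose_eq_transpose_conjTranspose, hTcoiso]
  have hTiso : Pᵀᴴ * Pᵀ = 1 := by
    have h := mul_conjTranspose_eq_one_of_trace_eq (V := Pᵀᴴ)
      (by rwa [conjTranspose_conjTranspose]) (by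
        rw [conjTranspose_conjTranspose, conjTranspose_transpose_eq_transpose_conjTranspose,
          trace_transpose_mul, hPiso])
    rwa [conjTranspose_conjTranspose] at h
  have entries : ∀ {A B : Matrix (Fin (n ^ 2)) (Fin (n ^ 2)) (H →L[ℂ] H)}, A * B = 1 →
      ∀ i j, ∑ k, A i k ∘L B k j = if i = j then 1 else 0 := fun h i j => by
    simpa [mul_apply, one_apply, ContinuousLinearMap.mul_def] using congr_fun₂ h i j
  exact ⟨entries hPiso, entries hPcoiso, entries hTiso, entries hTcoiso⟩

/-- If `ρ : M_n → M_n ⊗ B(H)`, determined on an orthonormal basis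
`{f_i}` of `M_n` by `ρ(f_i) = ∑_j f_j ⊗ p_{j,i}`, is a unital trace-preserving
*-homomorphism, then the block operator matrix `P = (p_{i,j})` is a bi-unitary. -/
theorem rho_star_hom_gives_biunitary
    {n : ℕ} (f : Fin (n ^ 2) → Matrix (Fin n) (Fin n) ℂ)
    (hON : ∀ i j, Matrix.trace ((f i)ᴴ * f j) / (n : ℂ) = if i = j then 1 else 0)
    {H : Type*} [NormedAddCommGroup H] [InnerProductSpace ℂ H] [CompleteSpace H]
    (p : Fin (n ^ 2) → Fin (n ^ 2) → (H →L[ℂ] H))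
    (ρ : Matrix (Fin n) (Fin n) ℂ →ₗ[ℂ] Matrix (Fin n) (Fin n) (H →L[ℂ] H))
    (hval : ∀ i, ρ (f i) = ∑ j, Matrix.of fun r s => f j r s • p j i)
    (hmul : ∀ a b, ρ (a * b) = ρ a * ρ b)
    (hstar : ∀ a, ρ (aᴴ) = (ρ a)ᴴ)
    (hone : ρ 1 = 1)
    (htr : ∀ a, ((n : ℂ))⁻¹ • ∑ i, ρ a i i =
      (Matrix.trace a / (n : ℂ)) • (1 : H →L[ℂ] H)) :
    (∀ i j, ∑ k, ContinuousLinearMap.adjoint (p k i) ∘L p k j =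
        if i = j then (1 : H →L[ℂ] H) else 0) ∧
    (∀ i j, ∑ k, p i k ∘L ContinuousLinearMap.adjoint (p j k) =
        if i = j then (1 : H →L[ℂ] H) else 0) ∧
    (∀ i j, ∑ k, ContinuousLinearMap.adjoint (p i k) ∘L p j k =
        if i = j then (1 : H →L[ℂ] H) else 0) ∧
    (∀ i j, ∑ k, p k i ∘L ContinuousLinearMap.adjoint (p k j) =
        if i = j then (1 : H →L[ℂ] H) else 0) :=
  rho_star_hom_gives_biunitary_general f hON p ρ hval hmul hstar htr
end
end

section
/- Fix n ∈ ℕ and let A be a quantum adjacency matrix on (M_n, tr). Set e := n·∑_{i,j=1}^n ε_{i,j}⊗A(ε_{j,i}) ∈ M_n⊗M_n. Then: (a) Ψ(A) = e, where A is expanded as A = n·∑_{i,j=1}^n Θ_{Λ(ε_{i,j}),Λ(A(ε_{i,j}))}; (b) e is invariant under the flip 𝔣 of M_n⊗M_n determined by 𝔣(a⊗b) = b⊗a; (c) e^* = e, where the involution on M_n⊗M_n is given by (a⊗b)^* = a^*⊗b^*; and (d) e is idempotent for the multiplication of M_n^{op}⊗M_n, i.e., e⋆e = e where ⋆ is the bilinear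 product determined by (a⊗b)⋆(c⊗d) = (c·a)⊗(b·d). In particular, e is a projection in M_n^{op}⊗M_n. -/
open scoped ComplexOrder
open scoped Kronecker
open Matrix

noncomputable section

/-- The element `e = n ∑_{i,j} ε_{i,j} ⊗ A(ε_{j,i})` of `M_n ⊗ M_n`. -/
def eMat (n : ℕ) (A : Matrix (Fin n) (Fin n) ℂ →ₗ[ℂ] Matrix (Fin n) (Fin n) ℂ) :
    Matrix (Fin n × Fin n) (Fin n × Fin n) ℂ :=
  (n : ℂ) • ∑ i, ∑ j, (eps i j) ⊗ₖ (A (eps j i))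

/-- The linear isomorphism `Ψ : B(L²(M_n)) → M_n ⊗ M_n`, determined by
`Ψ(Θ_{Λ(x),Λ(y)}) = x^* ⊗ y`; in closed form `Ψ(T) = n ∑_{i,j} ε_{i,j}^* ⊗ T(ε_{i,j})`. -/
def Psi (n : ℕ) (T : Matrix (Fin n) (Fin n) ℂ → Matrix (Fin n) (Fin n) ℂ) :
    Matrix (Fin n × Fin n) (Fin n × Fin n) ℂ :=
  (n : ℂ) • ∑ i, ∑ j, (eps i j)ᴴ ⊗ₖ (T (eps i j))

/-- The flip `𝔣` of `M_n ⊗ M_n`, determined by `𝔣(a ⊗ b) = b ⊗ a`. -/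
def flipT {n : ℕ} (M : Matrix (Fin n × Fin n) (Fin n × Fin n) ℂ) :
    Matrix (Fin n × Fin n) (Fin n × Fin n) ℂ :=
  Matrix.of fun p q => M (p.2, p.1) (q.2, q.1)

/-- The multiplication of `M_n^{op} ⊗ M_n`, determined by
`(a ⊗ b) ⋆ (c ⊗ d) = (c·a) ⊗ (b·d)`. -/
def opProd {n : ℕ} (M N : Matrix (Fin n × Fin n) (Fin n × Fin n) ℂ) :
    Matrix (Fin n × Fin n) (Fin n × Fin n) ℂ :=
  Matrix.of fun p q => ∑ r, ∑ s, M (r, p.2) (q.1, s) * N (p.1, s) (r, q.2)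

/-!
`Ψ(A) = e` is just `ε_{i,j}^* = ε_{j,i}`. The other claims are checked entrywise, using
`e_{(a,b),(c,d)} = n · A(ε_{c,a})_{b,d}`. Condition (2) at `x = ε_{c,a}` gives the symmetry
`A(ε_{c,a})_{b,d} = A(ε_{d,b})_{a,c}`, which is flip invariance; self-adjointness of `A` at a pair
of matrix units gives `conj A(ε_{p,q})_{r,s} = A(ε_{r,s})_{p,q}`, which together with the symmetry
is `e^* = e`; and the `(a,b),(c,d)` entry of `e ⋆ e` is `n` times the `(b,d)` entry of
`n ∑_k A(ε_{c,k}) A(ε_{k,a})`, which is `A(ε_{c,a})` by condition (1).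
-/

lemma eps_apply {n : ℕ} (i j a b : Fin n) : eps i j a b = if i = a ∧ j = b then 1 else 0 :=
  rfl

lemma conjTranspose_eps {n : ℕ} (i j : Fin n) : (eps i j)ᴴ = eps j i := by
  simp [eps, conjTranspose_single]

lemma trace_mul_eps {n : ℕ} (M : Matrix (Fin n) (Fin n) ℂ) (i j : Fin n) :
    trace (M * eps i j) = M j i := by
  simp [eps, trace_mul_single]

lemma Psi_eq_eMat {n : ℕ} (A : Matrix (Fin n) (Fin n) ℂ →ₗ[ℂ] Matrix (Fin n) (Fin n) ℂ) :
    Psi n (fun x => A x) = eMat n A := by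
  simp only [Psi, eMat, conjTranspose_eps]
  rw [Finset.sum_comm]

lemma eMat_apply {n : ℕ} (A : Matrix (Fin n) (Fin n) ℂ →ₗ[ℂ] Matrix (Fin n) (Fin n) ℂ)
    (a b c d : Fin n) : eMat n A (a, b) (c, d) = n * A (eps c a) b d := by
  simp [eMat, Matrix.sum_apply, eps_apply, ite_and]

namespace IsQAdj

variable {n : ℕ} {A : Matrix (Fin n) (Fin n) ℂ →ₗ[ℂ] Matrix (Fin n) (Fin n) ℂ}

lemma apply_apply_eq_trace (hA : IsQAdj n A) (x : Matrix (Fin n) (Fin n) ℂ) (b d : Fin n) :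
    A x b d = trace (A (eps d b) * x) := by
  have hn : (n : ℂ) ≠ 0 := Nat.cast_ne_zero.mpr (Fin.pos b).ne'
  rw [hA.2.2.1 x]
  simp [Matrix.sum_apply, eps_apply, ite_and, mul_div_cancel₀ _ hn]

lemma apply_eps_apply_swap (hA : IsQAdj n A) (a b c d : Fin n) :
    A (eps c a) b d = A (eps d b) a c := by
  rw [hA.apply_apply_eq_trace, trace_mul_eps]

lemma star_apply_eps_apply (hA : IsQAdj n A) (p q r s : Fin n) :
    star (A (eps p q) r s) = A (eps r s) p q := by
  have hn : (n : ℂ) ≠ 0 := Nat.cast_ne_zero.mpr (Fin.pos p).ne'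
  have h := (div_left_inj' hn).mp (hA.1 (eps p q) (eps r s))
  rwa [conjTranspose_eps, trace_mul_eps, trace_mul_comm, trace_mul_eps, conjTranspose_apply] at h

lemma flipT_eMat (hA : IsQAdj n A) : flipT (eMat n A) = eMat n A := by
  ext ⟨a, b⟩ ⟨c, d⟩
  simp only [flipT, of_apply, eMat_apply, hA.apply_eps_apply_swap b]

lemma conjTranspose_eMat (hA : IsQAdj n A) : (eMat n A)ᴴ = eMat n A := by
  ext ⟨a, b⟩ ⟨c, d⟩
  rw [conjTranspose_apply, eMat_apply, eMat_apply, star_mul', hA.star_apply_eps_apply,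
    hA.apply_eps_apply_swap b a d c, star_natCast]

lemma opProd_eMat_self (hA : IsQAdj n A) : opProd (eMat n A) (eMat n A) = eMat n A := by
  ext ⟨a, b⟩ ⟨c, d⟩
  have hSchur := congrFun (congrFun (hA.2.1 c a) b) d
  simp only [Matrix.smul_apply, Matrix.sum_apply, mul_apply, smul_eq_mul] at hSchur
  simp only [opProd, of_apply, eMat_apply, ← hSchur, Finset.mul_sum]
  exact Finset.sum_congr rfl fun r _ => Finset.sum_congr rfl fun s _ => by ring

end IsQAdj

/-- For a quantum adjacency matrix `A`, the element
`e = n ∑ ε_{i,j} ⊗ A(ε_{j,i})` equals `Ψ(A)`, is flip-invariant, self-adjoint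
(here `(a ⊗ b)^* = a^* ⊗ b^*`, i.e. `e^* = eᴴ`), and idempotent in `M_n^{op} ⊗ M_n`;
in particular `e` is a projection in `M_n^{op} ⊗ M_n`. -/
theorem eMat_is_projection {n : ℕ}
    (A : Matrix (Fin n) (Fin n) ℂ →ₗ[ℂ] Matrix (Fin n) (Fin n) ℂ)
    (hA : IsQAdj n A) :
    Psi n (fun x => A x) = eMat n A ∧
    flipT (eMat n A) = eMat n A ∧
    (eMat n A)ᴴ = eMat n A ∧
    opProd (eMat n A) (eMat n A) = eMat n A :=
  ⟨Psi_eq_eMat A, hA.flipT_eMat, hA.conjTranspose_eMat, hA.opProd_eMat_self⟩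
end
end

section
/- Fix n ∈ ℕ, let A be a quantum adjacency matrix on (M_n, tr), and let S' ⊆ B(L²(M_n)) be the linear span of the operators L_a∘A∘L_b, a, b ∈ M_n, where L_a is left multiplication by a. Set e := n·∑_{i,j=1}^n ε_{i,j}⊗A(ε_{j,i}) ∈ M_n⊗M_n. Then Ψ(S') = span{(1⊗a)·e·(b⊗1) : a, b ∈ M_n}, where the products on the right are taken in the algebra M_n⊗M_n with its usual multiplication. -/
/-!
Entrywise, `Ψ(T)_{(p,q),(r,s)} = n · T(ε_{r,p})_{q,s}`, so `e = Ψ(A)`, and since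
`b ε_{r,p} = ∑_w b_{w,r} ε_{w,p}` one gets `Ψ(L_a ∘ T ∘ L_b) = (1 ⊗ a) Ψ(T) (b ⊗ 1)` for every
linear `T`. As `Ψ` is linear, it maps the span of the `L_a ∘ A ∘ L_b` onto the span of their images.
-/

open scoped ComplexOrder
open scoped Kronecker
open Matrix

noncomputable section

section KroneckerOne

variable {R m : Type*} [CommSemiring R] [Fintype m] [DecidableEq m]

theorem one_kronecker_mul_apply (a : Matrix m m R) (C : Matrix (m × m) (m × m) R)
    (p q : m) (z : m × m) :
    (((1 : Matrix m m R) ⊗ₖ a) * C) (p, q) z = ∑ v, a q v * C (p, v) z := by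
  simp [Matrix.mul_apply, Fintype.sum_prod_type, Matrix.one_apply, ite_mul]

theorem mul_kronecker_one_apply (C : Matrix (m × m) (m × m) R) (b : Matrix m m R)
    (z : m × m) (r s : m) :
    (C * (b ⊗ₖ (1 : Matrix m m R))) z (r, s) = ∑ w, C z (w, s) * b w r := by
  simp [Matrix.mul_apply, Fintype.sum_prod_type, Matrix.one_apply]

end KroneckerOne

theorem mul_eps {n : ℕ} (b : Matrix (Fin n) (Fin n) ℂ) (r p : Fin n) :
    b * eps r p = ∑ w, b w r • eps w p := by
  ext i j
  by_cases hp : p = j <;> simp [eps, Matrix.mul_apply, Matrix.single, Matrix.sum_apply, hp]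

theorem Psi_apply {n : ℕ} (T : Matrix (Fin n) (Fin n) ℂ → Matrix (Fin n) (Fin n) ℂ)
    (p q r s : Fin n) : Psi n T (p, q) (r, s) = n * T (eps r p) q s := by
  simp only [Psi, eps, Matrix.conjTranspose_single, star_one, Matrix.smul_apply,
    Matrix.sum_apply, Matrix.kroneckerMap_apply, Matrix.single_apply, smul_eq_mul]
  simp [ite_and]

theorem eMat_eq_Psi {n : ℕ} (A : Matrix (Fin n) (Fin n) ℂ →ₗ[ℂ] Matrix (Fin n) (Fin n) ℂ) :
    eMat n A = Psi n A := by
  simp only [eMat, Psi, eps, Matrix.conjTranspose_single, star_one]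
  rw [Finset.sum_comm]

theorem Psi_mulLeft_comp_comp_mulLeft {n : ℕ}
    (T : Matrix (Fin n) (Fin n) ℂ →ₗ[ℂ] Matrix (Fin n) (Fin n) ℂ)
    (a b : Matrix (Fin n) (Fin n) ℂ) :
    Psi n (LinearMap.mulLeft ℂ a ∘ₗ T ∘ₗ LinearMap.mulLeft ℂ b) =
      (1 ⊗ₖ a) * Psi n T * (b ⊗ₖ 1) := by
  ext ⟨p, q⟩ ⟨r, s⟩
  simp only [mul_kronecker_one_apply, one_kronecker_mul_apply, Psi_apply]
  simp only [LinearMap.comp_apply, LinearMap.mulLeft_apply, mul_eps, map_sum, map_smul,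
    Matrix.mul_apply, Matrix.sum_apply, Matrix.smul_apply, smul_eq_mul, Finset.mul_sum,
    Finset.sum_mul]
  exact Finset.sum_congr rfl fun _ _ => Finset.sum_congr rfl fun _ _ => by ring

def psiLinearMap (n : ℕ) :
    (Matrix (Fin n) (Fin n) ℂ →ₗ[ℂ] Matrix (Fin n) (Fin n) ℂ) →ₗ[ℂ]
      Matrix (Fin n × Fin n) (Fin n × Fin n) ℂ where
  toFun T := Psi n T
  map_add' T S := by
    ext ⟨p, q⟩ ⟨r, s⟩
    simp [Psi_apply, mul_add]
  map_smul' c T := by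
    ext ⟨p, q⟩ ⟨r, s⟩
    simp only [Psi_apply, LinearMap.smul_apply, Matrix.smul_apply, smul_eq_mul,
      RingHom.id_apply]
    ring

theorem Psi_image_of_bimodule_general {n : ℕ}
    (A : Matrix (Fin n) (Fin n) ℂ →ₗ[ℂ] Matrix (Fin n) (Fin n) ℂ) :
    (fun T : Matrix (Fin n) (Fin n) ℂ →ₗ[ℂ] Matrix (Fin n) (Fin n) ℂ => Psi n T) ''
        ((Submodule.span ℂ
          {T : Matrix (Fin n) (Fin n) ℂ →ₗ[ℂ] Matrix (Fin n) (Fin n) ℂ |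
            ∃ a b : Matrix (Fin n) (Fin n) ℂ,
              T = LinearMap.mulLeft ℂ a ∘ₗ A ∘ₗ LinearMap.mulLeft ℂ b}) : Set _) =
      ((Submodule.span ℂ
          {M : Matrix (Fin n × Fin n) (Fin n × Fin n) ℂ |
            ∃ a b : Matrix (Fin n) (Fin n) ℂ,
              M = ((1 : Matrix (Fin n) (Fin n) ℂ) ⊗ₖ a) * eMat n A *
                (b ⊗ₖ (1 : Matrix (Fin n) (Fin n) ℂ))}) : Set _) := by
  change psiLinearMap n '' _ = _
  rw [← Submodule.map_coe, Submodule.map_span]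
  congr 2
  ext M
  simp only [Set.mem_image, Set.mem_ofPred_eq, eMat_eq_Psi]
  constructor
  · rintro ⟨T, ⟨a, b, rfl⟩, rfl⟩
    exact ⟨a, b, Psi_mulLeft_comp_comp_mulLeft A a b⟩
  · rintro ⟨a, b, rfl⟩
    exact ⟨_, ⟨a, b, rfl⟩, Psi_mulLeft_comp_comp_mulLeft A a b⟩

/-- For a quantum adjacency matrix `A`, with `S'` the `M_n`-bimodule
generated by `A` inside `B(L²(M_n))`, one has
`Ψ(S') = span{(1 ⊗ a) e (b ⊗ 1) : a, b ∈ M_n}`. -/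
theorem Psi_image_of_bimodule {n : ℕ}
    (A : Matrix (Fin n) (Fin n) ℂ →ₗ[ℂ] Matrix (Fin n) (Fin n) ℂ)
    (hA : IsQAdj n A) :
    (fun T : Matrix (Fin n) (Fin n) ℂ →ₗ[ℂ] Matrix (Fin n) (Fin n) ℂ => Psi n T) ''
        ((Submodule.span ℂ
          {T : Matrix (Fin n) (Fin n) ℂ →ₗ[ℂ] Matrix (Fin n) (Fin n) ℂ |
            ∃ a b : Matrix (Fin n) (Fin n) ℂ,
              T = LinearMap.mulLeft ℂ a ∘ₗ A ∘ₗ LinearMap.mulLeft ℂ b}) : Set _) =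
      ((Submodule.span ℂ
          {M : Matrix (Fin n × Fin n) (Fin n × Fin n) ℂ |
            ∃ a b : Matrix (Fin n) (Fin n) ℂ,
              M = ((1 : Matrix (Fin n) (Fin n) ℂ) ⊗ₖ a) * eMat n A *
                (b ⊗ₖ (1 : Matrix (Fin n) (Fin n) ℂ))}) : Set _) :=
  Psi_image_of_bimodule_general A
end
end

section
/- Fix n ∈ ℕ, an orthonormal basis {Λ(f_i)}_{i=1}^{n²} of L²(M_n), and an algebraic quantum graph G = (M_n, tr, A). Let S' ⊆ B(L²(M_n)) be the linear span of the operators L_a∘A∘L_b (a,b ∈ M_n, L_a = left multiplication by a), let 𝒰_G := (Λ⊗Λ)(Ψ(S')) ⊆ L²(M_n)⊗L²(M_n), and let 𝒰̃_G := (∂⊗1)(𝒰_G), where ∂ is the linear operator on L²(M_n) determined by ∂(Λ(f_i^*)) = Λ(f_i). Then 𝒰̃_G is a quantum pseudo-graph: (a) every element of 𝒰̃_G is orthogonal to ∑_{k=1}^{n²} Λ(f_k)⊗Λ(f_k) (skewness); and (b) (𝔡∘𝔣)(𝒰̃_G) = 𝒰̃_G, where 𝔣 is the flip u⊗v ↦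 v⊗u and 𝔡 is the conjugate-linear map sending ∑_{i,j} α_{i,j}·Λ(f_i)⊗Λ(f_j) to ∑_{i,j} conj(α_{i,j})·Λ(f_i)⊗Λ(f_j). -/
/-!
Write `Φ(T) = ∑ₖ fₖ ⊗ T(fₖ)`. Since `n²` orthonormal matrices form a basis of `M_n`,
`Ψ(T) = ∑ₖ fₖ^* ⊗ T(fₖ)`, so `(∂ ⊗ 1)(Ψ(T)) = Φ(T)` and `𝒰̃_G = Φ(S')`.
Pairing `Φ(T)` with `∑ₖ fₖ ⊗ fₖ` gives `n² · Tr T`, and `Tr (L_a A L_b) = Tr (L_{ba} A)`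
vanishes by condition (3). The coefficient of `fᵢ ⊗ fⱼ` in `Φ(T)` is `tr (fⱼ^* T(fᵢ))`, so
`𝔡 ∘ 𝔣` sends `Φ(T)` to `Φ(T†)`; as `A` is self-adjoint, `S'` is stable under the involution
`T ↦ T†`, whence `(𝔡 ∘ 𝔣)(𝒰̃_G) = 𝒰̃_G`.
-/

open scoped ComplexOrder
open scoped Kronecker
open Matrix

noncomputable section

/-- The coefficient of `Λ(f_i) ⊗ Λ(f_j)` in `W`, with respect to the inner product of
`L²(M_n) ⊗ L²(M_n)` (which in the Kronecker coordinates is `(1/n²)·` Frobenius). -/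
def coeff {n : ℕ} (f : Fin (n ^ 2) → Matrix (Fin n) (Fin n) ℂ) (i j : Fin (n ^ 2))
    (W : Matrix (Fin n × Fin n) (Fin n × Fin n) ℂ) : ℂ :=
  ((n : ℂ) ^ 2)⁻¹ * ∑ p : Fin n × Fin n, ∑ q : Fin n × Fin n,
    (starRingEnd ℂ) ((f i ⊗ₖ f j) p q) * W p q

/-- The conjugate-linear map `𝔡`, conjugating the coefficients with respect to the basis
`{Λ(f_i) ⊗ Λ(f_j)}`. -/
def dmap {n : ℕ} (f : Fin (n ^ 2) → Matrix (Fin n) (Fin n) ℂ)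
    (W : Matrix (Fin n × Fin n) (Fin n × Fin n) ℂ) :
    Matrix (Fin n × Fin n) (Fin n × Fin n) ℂ :=
  ∑ i, ∑ j, (starRingEnd ℂ) (coeff f i j W) • (f i ⊗ₖ f j)

/-- For `T : L²(M_n) → L²(M_n)`, the operator `T ⊗ 1` on `L²(M_n) ⊗ L²(M_n)`. -/
def tensorFirst {n : ℕ} (T : Matrix (Fin n) (Fin n) ℂ → Matrix (Fin n) (Fin n) ℂ)
    (W : Matrix (Fin n × Fin n) (Fin n × Fin n) ℂ) :
    Matrix (Fin n × Fin n) (Fin n × Fin n) ℂ :=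
  Matrix.of fun p q => T (Matrix.of fun i k => W (i, p.2) (k, q.2)) p.1 q.1

section MatrixFacts

lemma sum_kronecker {ι κ ν : Type*} [Fintype ν] (x : ν → Matrix ι ι ℂ) (y : Matrix κ κ ℂ) :
    (∑ k, x k) ⊗ₖ y = ∑ k, x k ⊗ₖ y := by
  ext; simp [Matrix.sum_apply, Finset.sum_mul]

lemma kronecker_sum {ι κ ν : Type*} [Fintype ν] (x : Matrix ι ι ℂ) (y : ν → Matrix κ κ ℂ) :
    x ⊗ₖ (∑ k, y k) = ∑ k, x ⊗ₖ y k := by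
  ext; simp [Matrix.sum_apply, Finset.mul_sum]

variable {ι κ : Type*} [Fintype ι] [Fintype κ]

lemma trace_conjTranspose_mul_eq_sum (x y : Matrix ι ι ℂ) :
    trace (xᴴ * y) = ∑ p, ∑ q, star (x p q) * y p q := by
  simp only [trace, diag_apply, mul_apply, conjTranspose_apply]
  exact Finset.sum_comm

lemma trace_conjTranspose_kronecker_mul (x z : Matrix ι ι ℂ) (y w : Matrix κ κ ℂ) :
    trace ((x ⊗ₖ y)ᴴ * (z ⊗ₖ w)) = trace (xᴴ * z) * trace (yᴴ * w) := by
  rw [conjTranspose_kronecker, ← mul_kronecker_mul, trace_kronecker]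

variable [DecidableEq ι]

lemma linearMap_apply_eq_sum_smul_single (T : Matrix ι ι ℂ →ₗ[ℂ] Matrix ι ι ℂ)
    (x : Matrix ι ι ℂ) : T x = ∑ a, ∑ b, x a b • T (single a b 1) := by
  conv_lhs => rw [matrix_eq_sum_single x]
  simp [map_sum, ← map_smul, smul_single]

lemma linearMap_trace_eq_sum_apply_single (T : Matrix ι ι ℂ →ₗ[ℂ] Matrix ι ι ℂ) :
    LinearMap.trace ℂ _ T = ∑ a, ∑ b, T (single a b 1) a b := by
  have hrepr (x : Matrix ι ι ℂ) (a b : ι) : (stdBasis ℂ ι ι).repr x (a, b) = x a b := by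
    simp [stdBasis, Pi.basis_repr]
  rw [LinearMap.trace_eq_matrix_trace ℂ (stdBasis ℂ ι ι), trace, Fintype.sum_prod_type]
  simp only [diag_apply, LinearMap.toMatrix_apply, stdBasis_eq_single, hrepr]

lemma sum_star_mul_eq_of_orthogonal [DecidableEq κ] (e : κ ≃ ι × ι) {c : ℂ} (hc : c ≠ 0)
    {f : κ → Matrix ι ι ℂ} (hf : ∀ i j, trace ((f i)ᴴ * f j) = if i = j then c else 0)
    (p q r s : ι) :
    ∑ k, star (f k p q) * f k r s = if (p, q) = (r, s) then c else 0 := by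
  -- `C` is square up to `e`, so its right inverse `c⁻¹ • Cᴴ` is also a left inverse.
  let C : Matrix κ (ι × ι) ℂ := of fun k pq => f k pq.1 pq.2
  have hCC : C * (c⁻¹ • Cᴴ) = 1 := by
    ext i j
    have hij : (C * Cᴴ) i j = trace ((f j)ᴴ * f i) := by
      simp [C, mul_apply, trace_conjTranspose_mul_eq_sum, Fintype.sum_prod_type, mul_comm]
    simp [hij, hf, one_apply, eq_comm, hc]
  have hCC' := congrFun (congrFun ((mul_eq_one_comm_of_equiv e).mp hCC) (p, q)) (r, s)
  rw [smul_mul, Matrix.smul_apply, one_apply, smul_eq_mul, inv_mul_eq_iff_eq_mul₀ hc] at hCC'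
  simpa [C, mul_apply] using hCC'

end MatrixFacts

section TraceAdjoint

variable {ι : Type*} [Fintype ι]

def IsTraceAdjoint (T T' : Matrix ι ι ℂ →ₗ[ℂ] Matrix ι ι ℂ) : Prop :=
  ∀ x y, trace ((T x)ᴴ * y) = trace (xᴴ * T' y)

variable {T T' S S' : Matrix ι ι ℂ →ₗ[ℂ] Matrix ι ι ℂ}

lemma IsTraceAdjoint.symm (h : IsTraceAdjoint T T') : IsTraceAdjoint T' T := fun x y => by
  calc trace ((T' x)ᴴ * y) = star (trace (yᴴ * T' x)) := by
        rw [← trace_conjTranspose, conjTranspose_mul, conjTranspose_conjTranspose]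
    _ = star (trace ((T y)ᴴ * x)) := by rw [h]
    _ = trace (xᴴ * T y) := by
        rw [← trace_conjTranspose, conjTranspose_mul, conjTranspose_conjTranspose]

lemma isTraceAdjoint_zero : IsTraceAdjoint (0 : Matrix ι ι ℂ →ₗ[ℂ] Matrix ι ι ℂ) 0 :=
  fun x y => by simp

lemma IsTraceAdjoint.add (h : IsTraceAdjoint T T') (h' : IsTraceAdjoint S S') :
    IsTraceAdjoint (T + S) (T' + S') := fun x y => by
  simp [conjTranspose_add, Matrix.add_mul, Matrix.mul_add, trace_add, h x y, h' x y]

lemma IsTraceAdjoint.smul (h : IsTraceAdjoint T T') (c : ℂ) :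
    IsTraceAdjoint (c • T) (star c • T') := fun x y => by
  simp [conjTranspose_smul, trace_smul, h x y]

lemma IsTraceAdjoint.comp (h : IsTraceAdjoint T T') (h' : IsTraceAdjoint S S') :
    IsTraceAdjoint (T ∘ₗ S) (S' ∘ₗ T') := fun x y => by
  rw [LinearMap.comp_apply, LinearMap.comp_apply, h, h']

lemma isTraceAdjoint_mulLeft (a : Matrix ι ι ℂ) :
    IsTraceAdjoint (LinearMap.mulLeft ℂ a) (LinearMap.mulLeft ℂ aᴴ) := fun x y => by
  simp [conjTranspose_mul, Matrix.mul_assoc]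

def sandwichSpan (A : Matrix ι ι ℂ →ₗ[ℂ] Matrix ι ι ℂ) :
    Submodule ℂ (Matrix ι ι ℂ →ₗ[ℂ] Matrix ι ι ℂ) :=
  Submodule.span ℂ
    {T | ∃ a b : Matrix ι ι ℂ, T = LinearMap.mulLeft ℂ a ∘ₗ A ∘ₗ LinearMap.mulLeft ℂ b}

lemma exists_isTraceAdjoint_mem_sandwichSpan {A : Matrix ι ι ℂ →ₗ[ℂ] Matrix ι ι ℂ}
    (hA : IsTraceAdjoint A A) (hT : T ∈ sandwichSpan A) :
    ∃ T' ∈ sandwichSpan A, IsTraceAdjoint T T' := by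
  induction hT using Submodule.span_induction with
  | mem T hT =>
    obtain ⟨a, b, rfl⟩ := hT
    refine ⟨LinearMap.mulLeft ℂ bᴴ ∘ₗ A ∘ₗ LinearMap.mulLeft ℂ aᴴ,
      Submodule.subset_span ⟨bᴴ, aᴴ, rfl⟩, ?_⟩
    have h := (isTraceAdjoint_mulLeft a).comp (hA.comp (isTraceAdjoint_mulLeft b))
    rwa [LinearMap.comp_assoc] at h
  | zero => exact ⟨0, zero_mem _, isTraceAdjoint_zero⟩
  | add T S _ _ hT hS =>
    obtain ⟨T', hT'mem, hT'⟩ := hT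
    obtain ⟨S', hS'mem, hS'⟩ := hS
    exact ⟨T' + S', add_mem hT'mem hS'mem, hT'.add hS'⟩
  | smul c T _ hT =>
    obtain ⟨T', hT'mem, hT'⟩ := hT
    exact ⟨star c • T', Submodule.smul_mem _ _ hT'mem, hT'.smul c⟩

variable [DecidableEq ι] {A : Matrix ι ι ℂ →ₗ[ℂ] Matrix ι ι ℂ}

lemma trace_mulLeft_comp_eq_zero (hA : ∀ i, ∑ k, A (single i k 1) * single k i 1 = 0)
    (c : Matrix ι ι ℂ) :
    LinearMap.trace ℂ _ (LinearMap.mulLeft ℂ c ∘ₗ A) = 0 := by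
  have hrow (i r : ι) : ∑ k, A (single i k 1) r k = 0 := by
    simpa [Matrix.sum_apply] using congrFun (congrFun (hA i) r) i
  calc LinearMap.trace ℂ _ (LinearMap.mulLeft ℂ c ∘ₗ A)
      = ∑ i, ∑ r, c i r * ∑ k, A (single i k 1) r k := by
        simp only [linearMap_trace_eq_sum_apply_single, LinearMap.comp_apply,
          LinearMap.mulLeft_apply, mul_apply, Finset.mul_sum]
        exact Finset.sum_congr rfl fun i _ => Finset.sum_comm
    _ = 0 := by simp [hrow]

lemma trace_eq_zero_of_mem_sandwichSpan
    (hA : ∀ i, ∑ k, A (single i k 1) * single k i 1 = 0) (hT : T ∈ sandwichSpan A) :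
    LinearMap.trace ℂ _ T = 0 := by
  suffices sandwichSpan A ≤ LinearMap.ker (LinearMap.trace ℂ _) from this hT
  refine Submodule.span_le.mpr ?_
  rintro _ ⟨a, b, rfl⟩
  rw [SetLike.mem_coe, LinearMap.mem_ker, ← LinearMap.comp_assoc, LinearMap.trace_comp_comm',
    ← LinearMap.comp_assoc, ← LinearMap.mulLeft_mul]
  exact trace_mulLeft_comp_eq_zero hA _

end TraceAdjoint

def choiMatrix {ι κ : Type*} [Fintype κ] (f : κ → Matrix ι ι ℂ)
    (T : Matrix ι ι ℂ →ₗ[ℂ] Matrix ι ι ℂ) : Matrix (ι × ι) (ι × ι) ℂ :=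
  ∑ k, f k ⊗ₖ T (f k)

def IsTrOrthonormal {n : ℕ} (f : Fin (n ^ 2) → Matrix (Fin n) (Fin n) ℂ) : Prop :=
  ∀ i j, trace ((f i)ᴴ * f j) / (n : ℂ) = if i = j then 1 else 0

lemma natCast_ne_zero_of_fin_sq {n : ℕ} (i : Fin (n ^ 2)) : (n : ℂ) ≠ 0 := by
  rintro h
  rw [Nat.cast_eq_zero.mp h] at i
  exact i.elim0

lemma coeff_eq_trace {n : ℕ} (f : Fin (n ^ 2) → Matrix (Fin n) (Fin n) ℂ) (i j : Fin (n ^ 2))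
    (W : Matrix (Fin n × Fin n) (Fin n × Fin n) ℂ) :
    coeff f i j W = ((n : ℂ) ^ 2)⁻¹ * trace ((f i ⊗ₖ f j)ᴴ * W) := by
  simp only [coeff, trace_conjTranspose_mul_eq_sum, starRingEnd_apply]

lemma coeff_flipT {n : ℕ} (f : Fin (n ^ 2) → Matrix (Fin n) (Fin n) ℂ) (i j : Fin (n ^ 2))
    (W : Matrix (Fin n × Fin n) (Fin n × Fin n) ℂ) :
    coeff f i j (flipT W) = coeff f j i W := by
  unfold coeff flipT
  congr 1
  refine Fintype.sum_equiv (Equiv.prodComm _ _) _ _ fun ⟨p₁, p₂⟩ => ?_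
  refine Fintype.sum_equiv (Equiv.prodComm _ _) _ _ fun ⟨q₁, q₂⟩ => ?_
  simp only [kroneckerMap_apply, of_apply, Equiv.prodComm_apply, Prod.swap_prod_mk, map_mul]
  ring

lemma tensorFirst_sum_kronecker {n : ℕ} {ν : Type*} [Fintype ν]
    (D : Matrix (Fin n) (Fin n) ℂ →ₗ[ℂ] Matrix (Fin n) (Fin n) ℂ)
    (x y : ν → Matrix (Fin n) (Fin n) ℂ) :
    tensorFirst D (∑ k, x k ⊗ₖ y k) = ∑ k, D (x k) ⊗ₖ y k := by
  ext ⟨p₁, p₂⟩ ⟨q₁, q₂⟩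
  have hslice : (of fun i k => (∑ j, x j ⊗ₖ y j) (i, p₂) (k, q₂)) = ∑ j, y j p₂ q₂ • x j := by
    ext; simp [Matrix.sum_apply, mul_comm]
  simp only [tensorFirst, of_apply]
  rw [hslice]
  simp [Matrix.sum_apply, mul_comm]

namespace IsTrOrthonormal

variable {n : ℕ} {f : Fin (n ^ 2) → Matrix (Fin n) (Fin n) ℂ}

lemma trace_conjTranspose_mul (hf : IsTrOrthonormal f) (i j : Fin (n ^ 2)) :
    trace ((f i)ᴴ * f j) = if i = j then (n : ℂ) else 0 := by
  have h := hf i j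
  rw [div_eq_iff (natCast_ne_zero_of_fin_sq i)] at h
  rw [h]
  split_ifs <;> simp

lemma sum_star_mul (hf : IsTrOrthonormal f) (p q r s : Fin n) :
    ∑ k, star (f k p q) * f k r s = if (p, q) = (r, s) then (n : ℂ) else 0 :=
  sum_star_mul_eq_of_orthogonal ((finCongr (sq n)).trans finProdFinEquiv.symm)
    (Nat.cast_ne_zero.mpr p.pos.ne') hf.trace_conjTranspose_mul p q r s

lemma sum_trace_smul (hf : IsTrOrthonormal f) (x : Matrix (Fin n) (Fin n) ℂ) :
    ∑ k, trace ((f k)ᴴ * x) • f k = (n : ℂ) • x := by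
  ext r s
  calc (∑ k, trace ((f k)ᴴ * x) • f k) r s
      = ∑ p, ∑ q, x p q * ∑ k, star (f k p q) * f k r s := by
        simp only [Matrix.sum_apply, Matrix.smul_apply, trace_conjTranspose_mul_eq_sum,
          smul_eq_mul, Finset.sum_mul, Finset.mul_sum]
        rw [Finset.sum_comm]
        refine Finset.sum_congr rfl fun p _ => ?_
        rw [Finset.sum_comm]
        exact Finset.sum_congr rfl fun q _ => Finset.sum_congr rfl fun k _ => by ring
    _ = ((n : ℂ) • x) r s := by
        simp only [hf.sum_star_mul, Prod.mk.injEq, mul_ite, mul_zero, ite_and]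
        simp [mul_comm]

lemma sum_smul_conjTranspose (hf : IsTrOrthonormal f) (a b : Fin n) :
    ∑ k, f k a b • (f k)ᴴ = (n : ℂ) • (eps a b)ᴴ := by
  ext c d
  have h : ∑ k, f k a b * star (f k d c) = star (∑ k, star (f k a b) * f k d c) := by
    simp [star_sum, mul_comm]
  simp only [Matrix.sum_apply, Matrix.smul_apply, conjTranspose_apply, smul_eq_mul, h,
    hf.sum_star_mul]
  split_ifs <;> simp_all [eps, single, eq_comm]

lemma Psi_eq_sum_kronecker (hf : IsTrOrthonormal f)
    (T : Matrix (Fin n) (Fin n) ℂ →ₗ[ℂ] Matrix (Fin n) (Fin n) ℂ) :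
    Psi n T = ∑ k, (f k)ᴴ ⊗ₖ T (f k) := by
  calc Psi n T = ∑ a, ∑ b, ((n : ℂ) • (eps a b)ᴴ) ⊗ₖ T (eps a b) := by
        simp only [Psi, Finset.smul_sum, smul_kronecker]
    _ = ∑ k, ∑ a, ∑ b, (f k)ᴴ ⊗ₖ (f k a b • T (eps a b)) := by
        simp only [← hf.sum_smul_conjTranspose, sum_kronecker, smul_kronecker, kronecker_smul]
        exact (Finset.sum_congr rfl fun a _ => Finset.sum_comm).trans Finset.sum_comm
    _ = ∑ k, (f k)ᴴ ⊗ₖ T (f k) := by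
        refine Finset.sum_congr rfl fun k _ => ?_
        rw [linearMap_apply_eq_sum_smul_single T (f k)]
        simp only [kronecker_sum, eps]

lemma tensorFirst_Psi (hf : IsTrOrthonormal f)
    {D : Matrix (Fin n) (Fin n) ℂ →ₗ[ℂ] Matrix (Fin n) (Fin n) ℂ} (hD : ∀ i, D (f i)ᴴ = f i)
    (T : Matrix (Fin n) (Fin n) ℂ →ₗ[ℂ] Matrix (Fin n) (Fin n) ℂ) :
    tensorFirst D (Psi n T) = choiMatrix f T := by
  rw [hf.Psi_eq_sum_kronecker, tensorFirst_sum_kronecker]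
  simp only [hD, choiMatrix]

lemma trace_kronecker_conjTranspose_mul_choiMatrix (hf : IsTrOrthonormal f)
    (T : Matrix (Fin n) (Fin n) ℂ →ₗ[ℂ] Matrix (Fin n) (Fin n) ℂ) (i : Fin (n ^ 2))
    (y : Matrix (Fin n) (Fin n) ℂ) :
    trace ((f i ⊗ₖ y)ᴴ * choiMatrix f T) = n * trace (yᴴ * T (f i)) := by
  simp [choiMatrix, Matrix.mul_sum, trace_sum, trace_conjTranspose_kronecker_mul,
    hf.trace_conjTranspose_mul]

lemma sum_trace_conjTranspose_mul_apply (hf : IsTrOrthonormal f)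
    (T : Matrix (Fin n) (Fin n) ℂ →ₗ[ℂ] Matrix (Fin n) (Fin n) ℂ) :
    ∑ k, trace ((f k)ᴴ * T (f k)) = n * LinearMap.trace ℂ _ T := by
  calc ∑ k, trace ((f k)ᴴ * T (f k))
      = ∑ a, ∑ b, trace ((∑ k, f k a b • (f k)ᴴ) * T (eps a b)) := by
        have hT (k) := linearMap_apply_eq_sum_smul_single T (f k)
        simp only [hT, Matrix.mul_sum, Matrix.sum_mul,
          trace_sum, Matrix.mul_smul, Matrix.smul_mul, eps]
        rw [Finset.sum_comm]
        exact Finset.sum_congr rfl fun a _ => Finset.sum_comm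
    _ = n * LinearMap.trace ℂ _ T := by
        simp [hf.sum_smul_conjTranspose, linearMap_trace_eq_sum_apply_single, eps, trace_single_mul,
          Finset.mul_sum]

lemma trace_conjTranspose_mul_choiMatrix (hf : IsTrOrthonormal f)
    (T : Matrix (Fin n) (Fin n) ℂ →ₗ[ℂ] Matrix (Fin n) (Fin n) ℂ) :
    trace ((∑ k, f k ⊗ₖ f k)ᴴ * choiMatrix f T) = n ^ 2 * LinearMap.trace ℂ _ T := by
  simp only [conjTranspose_sum, Matrix.sum_mul, trace_sum,
    hf.trace_kronecker_conjTranspose_mul_choiMatrix, ← Finset.mul_sum,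
    hf.sum_trace_conjTranspose_mul_apply]
  ring

lemma coeff_choiMatrix (hf : IsTrOrthonormal f)
    (T : Matrix (Fin n) (Fin n) ℂ →ₗ[ℂ] Matrix (Fin n) (Fin n) ℂ) (i j : Fin (n ^ 2)) :
    coeff f i j (choiMatrix f T) = trace ((f j)ᴴ * T (f i)) / n := by
  have hn := natCast_ne_zero_of_fin_sq i
  rw [coeff_eq_trace, hf.trace_kronecker_conjTranspose_mul_choiMatrix]
  field_simp

lemma choiMatrix_eq_sum (hf : IsTrOrthonormal f)
    (T : Matrix (Fin n) (Fin n) ℂ →ₗ[ℂ] Matrix (Fin n) (Fin n) ℂ) :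
    choiMatrix f T = ∑ i, ∑ j, (trace ((f j)ᴴ * T (f i)) / n) • (f i ⊗ₖ f j) := by
  refine Finset.sum_congr rfl fun i _ => ?_
  have hn := natCast_ne_zero_of_fin_sq i
  have hexp : T (f i) = ∑ j, (trace ((f j)ᴴ * T (f i)) / n) • f j := by
    calc T (f i) = (n : ℂ)⁻¹ • ((n : ℂ) • T (f i)) := by
          rw [smul_smul, inv_mul_cancel₀ hn, one_smul]
      _ = _ := by
          rw [← hf.sum_trace_smul, Finset.smul_sum]
          simp only [smul_smul, div_eq_inv_mul]
  conv_lhs => rw [hexp, kronecker_sum]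
  simp only [kronecker_smul]

lemma dmap_flipT_choiMatrix (hf : IsTrOrthonormal f)
    {T T' : Matrix (Fin n) (Fin n) ℂ →ₗ[ℂ] Matrix (Fin n) (Fin n) ℂ} (hT : IsTraceAdjoint T T') :
    dmap f (flipT (choiMatrix f T)) = choiMatrix f T' := by
  rw [hf.choiMatrix_eq_sum T', dmap]
  refine Finset.sum_congr rfl fun i _ => Finset.sum_congr rfl fun j _ => ?_
  rw [coeff_flipT, hf.coeff_choiMatrix, map_div₀, map_natCast, starRingEnd_apply,
    ← trace_conjTranspose, conjTranspose_mul, conjTranspose_conjTranspose, hT]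

end IsTrOrthonormal

namespace IsQAdj

variable {n : ℕ} {A : Matrix (Fin n) (Fin n) ℂ →ₗ[ℂ] Matrix (Fin n) (Fin n) ℂ}

lemma isTraceAdjoint (hA : IsQAdj n A) : IsTraceAdjoint A A := fun x y => by
  rcases eq_or_ne n 0 with rfl | hn
  · simp [trace]
  · exact (div_left_inj' (Nat.cast_ne_zero.mpr hn)).mp (hA.1 x y)

lemma sum_apply_single_mul_single (hA : IsQAdj n A) (i : Fin n) :
    ∑ k, A (single i k 1) * single k i 1 = 0 :=
  (smul_eq_zero.mp (hA.2.2.2 i i)).resolve_left (Nat.cast_ne_zero.mpr i.pos.ne')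

end IsQAdj

/-- For an algebraic quantum graph `G = (M_n, tr, A)`, the subspace
`𝒰̃_G = (∂ ⊗ 1)((Λ⊗Λ)(Ψ(S')))` is a quantum pseudo-graph: it is skew and invariant
under `𝔡 ∘ 𝔣`. -/
theorem tildeU_is_quantum_pseudo_graph {n : ℕ}
    (f : Fin (n ^ 2) → Matrix (Fin n) (Fin n) ℂ)
    (hON : ∀ i j, Matrix.trace ((f i)ᴴ * f j) / (n : ℂ) = if i = j then 1 else 0)
    (A : Matrix (Fin n) (Fin n) ℂ →ₗ[ℂ] Matrix (Fin n) (Fin n) ℂ)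
    (hA : IsQAdj n A)
    (D : Matrix (Fin n) (Fin n) ℂ ≃ₗ[ℂ] Matrix (Fin n) (Fin n) ℂ)
    (hD : ∀ i, D ((f i)ᴴ) = f i)
    (Ut : Set (Matrix (Fin n × Fin n) (Fin n × Fin n) ℂ))
    (hUt : Ut = tensorFirst (fun x => D x) ''
      ((fun T : Matrix (Fin n) (Fin n) ℂ →ₗ[ℂ] Matrix (Fin n) (Fin n) ℂ => Psi n T) ''
        ((Submodule.span ℂ
          {T : Matrix (Fin n) (Fin n) ℂ →ₗ[ℂ] Matrix (Fin n) (Fin n) ℂ |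
            ∃ a b : Matrix (Fin n) (Fin n) ℂ,
              T = LinearMap.mulLeft ℂ a ∘ₗ A ∘ₗ LinearMap.mulLeft ℂ b}) : Set _))) :
    (∀ v ∈ Ut, ∑ p : Fin n × Fin n, ∑ q : Fin n × Fin n,
        (starRingEnd ℂ) ((∑ k, f k ⊗ₖ f k) p q) * v p q = 0) ∧
    (fun W => dmap f (flipT W)) '' Ut = Ut := by
  have hf : IsTrOrthonormal f := hON
  have hUt_choi : Ut = choiMatrix f '' sandwichSpan A := by
    rw [hUt, Set.image_image]
    exact Set.image_congr fun T _ => hf.tensorFirst_Psi (D := D.toLinearMap) hD T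
  subst hUt_choi
  refine ⟨?_, ?_⟩
  · rintro _ ⟨T, hT, rfl⟩
    simp only [starRingEnd_apply, ← trace_conjTranspose_mul_eq_sum,
      hf.trace_conjTranspose_mul_choiMatrix,
      trace_eq_zero_of_mem_sandwichSpan hA.sum_apply_single_mul_single hT, mul_zero]
  · ext W
    constructor
    · rintro ⟨_, ⟨T, hT, rfl⟩, rfl⟩
      obtain ⟨T', hT'mem, hT'⟩ := exists_isTraceAdjoint_mem_sandwichSpan hA.isTraceAdjoint hT
      exact ⟨T', hT'mem, (hf.dmap_flipT_choiMatrix hT').symm⟩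
    · rintro ⟨T, hT, rfl⟩
      obtain ⟨T', hT'mem, hT'⟩ := exists_isTraceAdjoint_mem_sandwichSpan hA.isTraceAdjoint hT
      exact ⟨_, ⟨T', hT'mem, rfl⟩, hf.dmap_flipT_choiMatrix hT'.symm⟩
end
end
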